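/- arXiv:1607.04143 — 6 statements merged into one kernel-verified Lean document; each statement's English description precedes it below -/
import Mathlib

section
/- Under hypotheses (i)–(iii), for every t = 1, …, n the random variable B_t is conditionally independent of D_t given (A_t, C^t). -/
/-!
By (i) and (iii), the chain rule factors the law of `(A^n, B^n, C^n)` as
`∏ s, P(A_s, B_s) · P(C_s | A_s, B_s, C^{s-1})`. Summing out `b_s` for `s ≠ t` leaves the law
of `(B_t, A^n, C^n)` as a factor depending only on `(B_t, A_t, C^t)` times a factor free of
`B_t`, so `B_t` is conditionally independent of `(A^n, C^n)` given `(A_t, C^t)`. Since (ii) gives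
`B_t ⊥ D_t | (A^n, C^n)`, the contraction property of conditional independence yields
`B_t ⊥ D_t | (A_t, C^t)`.
-/

open MeasureTheory

noncomputable section

/-- Conditional independence of finite-valued random variables `U` and `V` given `W`:
`μ(U = u, V = v | W = w) = μ(U = u | W = w) · μ(V = v | W = w)` whenever
`μ(W = w) > 0`. -/
def CondIndepRV {Ω α β γ : Type*} [MeasurableSpace Ω] (μ : Measure Ω)
    (U : Ω → α) (V : Ω → β) (W : Ω → γ) : Prop :=
  ∀ u v w, 0 < (μ {ω | W ω = w}).toReal →
    (μ {ω | U ω = u ∧ V ω = v ∧ W ω = w}).toReal / (μ {ω | W ω = w}).toReal =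
      ((μ {ω | U ω = u ∧ W ω = w}).toReal / (μ {ω | W ω = w}).toReal) *
        ((μ {ω | V ω = v ∧ W ω = w}).toReal / (μ {ω | W ω = w}).toReal)

/-- Independence of a pair of finite-valued random variables. -/
def IndepRV {Ω α β : Type*} [MeasurableSpace Ω] (μ : Measure Ω)
    (U : Ω → α) (V : Ω → β) : Prop :=
  ∀ u v, (μ {ω | U ω = u ∧ V ω = v}).toReal =
    (μ {ω | U ω = u}).toReal * (μ {ω | V ω = v}).toReal

open Finset

/-- Conditional independence with the denominators cleared: it says nothing on null conditioning
events, which makes it stable under summing over values of the conditioning variable. -/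
def CondIndepCross {V α β γ : Type*} [MeasurableSpace V] (ν : Measure V)
    (X : V → α) (Y : V → β) (Z : V → γ) : Prop :=
  ∀ x y z, ν.real {v | X v = x ∧ Y v = y ∧ Z v = z} * ν.real {v | Z v = z} =
    ν.real {v | X v = x ∧ Z v = z} * ν.real {v | Y v = y ∧ Z v = z}

section CondIndepCross

variable {Ω V α β γ δ : Type*} [MeasurableSpace Ω] [MeasurableSpace V]

theorem measureReal_and_null {ν : Measure V} [IsFiniteMeasure ν] {P Q : V → Prop}
    (h : ν.real {v | Q v} = 0) : ν.real {v | P v ∧ Q v} = 0 :=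
  measureReal_mono_null (fun _ hv => hv.2) h

theorem condIndepRV_iff_condIndepCross (ν : Measure V) [IsFiniteMeasure ν]
    (X : V → α) (Y : V → β) (Z : V → γ) :
    CondIndepRV ν X Y Z ↔ CondIndepCross ν X Y Z := by
  refine forall₃_congr fun x y z => ?_
  simp only [← measureReal_def]
  rcases (measureReal_nonneg (μ := ν) (s := {v | Z v = z})).eq_or_lt with hz | hz
  · simp [← hz, measureReal_and_null hz.symm]
  · rw [div_mul_div_comm, div_eq_div_iff hz.ne' (by positivity), ← mul_assoc]
    simp only [hz, forall_const]
    exact mul_left_inj' hz.ne'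

theorem condIndepRV_comp_iff_condIndepCross_map [DiscreteMeasurableSpace V] (μ : Measure Ω)
    [IsFiniteMeasure μ] {F : Ω → V} (hF : Measurable F) (X : V → α) (Y : V → β) (Z : V → γ) :
    CondIndepRV μ (X ∘ F) (Y ∘ F) (Z ∘ F) ↔ CondIndepCross (μ.map F) X Y Z := by
  rw [← condIndepRV_iff_condIndepCross]
  simp only [CondIndepRV, Measure.map_apply hF MeasurableSet.of_discrete]
  rfl

variable {ν : Measure V} {X : V → α} {Y : V → β} {Z : V → γ}

theorem CondIndepCross.symm (h : CondIndepCross ν X Y Z) : CondIndepCross ν Y X Z := by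
  intro y x z
  simpa only [and_left_comm (a := Y _ = y), mul_comm (ν.real {v | Y v = y ∧ Z v = z})]
    using h x y z

variable [DiscreteMeasurableSpace V] [IsFiniteMeasure ν]

theorem sum_measureReal_fiber (f : V → α) (s : Finset α) (P : V → Prop) :
    ∑ a ∈ s, ν.real {v | f v = a ∧ P v} = ν.real {v | f v ∈ s ∧ P v} := by
  have hunion : {v | f v ∈ s ∧ P v} = ⋃ a ∈ s, {v | f v = a ∧ P v} := by
    ext v; simp
  rw [hunion, measureReal_biUnion_finset _ fun _ _ => .of_discrete]
  intro a _ b _ hab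
  exact Set.disjoint_left.2 fun v ha hb => hab (ha.1.symm.trans hb.1)

theorem sum_measureReal_fiber_univ [Fintype α] (f : V → α) (P : V → Prop) :
    ∑ a, ν.real {v | f v = a ∧ P v} = ν.real {v | P v} := by
  simp [sum_measureReal_fiber]

theorem sum_measureReal_fiber_right (f : V → α) (s : Finset α) (P : V → Prop) :
    ∑ a ∈ s, ν.real {v | P v ∧ f v = a} = ν.real {v | P v ∧ f v ∈ s} := by
  simpa only [and_comm] using sum_measureReal_fiber f s P

theorem CondIndepCross.comp_left [Fintype α] (h : CondIndepCross ν X Y Z) (f : α → δ) :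
    CondIndepCross ν (f ∘ X) Y Z := by
  classical
  intro x' y z
  have hfib (P : V → Prop) : ν.real {v | (f ∘ X) v = x' ∧ P v} =
      ∑ x ∈ univ.filter (f · = x'), ν.real {v | X v = x ∧ P v} := by
    simp [sum_measureReal_fiber]
  rw [hfib, hfib, sum_mul, sum_mul]
  exact sum_congr rfl fun x _ => h x y z

theorem CondIndepCross.comp [Fintype α] [Fintype β] {ε : Type*} (h : CondIndepCross ν X Y Z)
    (f : α → δ) (g : β → ε) : CondIndepCross ν (f ∘ X) (g ∘ Y) Z :=
  ((h.comp_left f).symm.comp_left g).symm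

/-- Contraction followed by decomposition. -/
theorem CondIndepCross.coarsen [Fintype γ] (h : γ → δ) (hXY : CondIndepCross ν X Y Z)
    (hXZ : CondIndepCross ν X Z (h ∘ Z)) : CondIndepCross ν X Y (h ∘ Z) := by
  classical
  intro x y w
  have hfib (P : V → Prop) : ν.real {v | P v ∧ (h ∘ Z) v = w} =
      ∑ z ∈ univ.filter (h · = w), ν.real {v | P v ∧ Z v = z} := by
    simp [sum_measureReal_fiber_right]
  have hXYW := hfib fun v => X v = x ∧ Y v = y
  simp only [and_assoc] at hXYW
  rw [hXYW, hfib (Y · = y), sum_mul, mul_sum]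
  refine sum_congr rfl fun z hz => ?_
  have hzw : h z = w := (mem_filter.1 hz).2
  have hZW (v : V) : (Z v = z ∧ (h ∘ Z) v = w) ↔ Z v = z :=
    ⟨And.left, fun hv => ⟨hv, by simp [hv, hzw]⟩⟩
  have hXZW := hXZ x z w
  simp only [hZW] at hXZW
  rcases eq_or_ne (ν.real {v | Z v = z}) 0 with h0 | h0
  · rw [measureReal_and_null (measureReal_and_null h0), measureReal_and_null h0, zero_mul,
      mul_zero]
  · apply mul_right_cancel₀ h0
    linear_combination ν.real {v | (h ∘ Z) v = w} * hXY x y z +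
      ν.real {v | Y v = y ∧ Z v = z} * hXZW

theorem condIndepCross_of_measureReal_eq_mul [Fintype α] [Fintype γ] (h : γ → δ)
    (f : α → δ → ℝ) (g : γ → ℝ)
    (hfac : ∀ x z, ν.real {v | X v = x ∧ Z v = z} = f x (h z) * g z) :
    CondIndepCross ν X Z (h ∘ Z) := by
  classical
  intro x z w
  by_cases hzw : h z = w
  · subst hzw
    have hZW (v : V) : (Z v = z ∧ (h ∘ Z) v = h z) ↔ Z v = z :=
      ⟨And.left, fun hv => ⟨hv, by simp [hv]⟩⟩
    have hfib (P : V → Prop) : ν.real {v | P v ∧ (h ∘ Z) v = h z} =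
        ∑ z' ∈ univ.filter (h · = h z), ν.real {v | P v ∧ Z v = z'} := by
      simp [sum_measureReal_fiber_right]
    have hmarg (z' : γ) : ν.real {v | Z v = z'} = (∑ x', f x' (h z')) * g z' := by
      rw [← sum_measureReal_fiber_univ X, sum_mul]
      exact sum_congr rfl fun x' _ => hfac x' z'
    have hW := hfib fun _ => True
    simp only [true_and] at hW
    simp only [hZW]
    rw [hfac, hW, hfib (X · = x), mul_sum, sum_mul]
    refine sum_congr rfl fun z' hz' => ?_
    rw [hfac, hmarg, hmarg, (mem_filter.1 hz').2]
    ring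
  · have hZW (v : V) : ¬(Z v = z ∧ (h ∘ Z) v = w) := fun hv => hzw (hv.1 ▸ hv.2)
    simp only [hZW, and_false, Set.ofPred_false, measureReal_empty, zero_mul, mul_zero]

end CondIndepCross

theorem sum_filter_apply_eq_prod {ι R : Type*} [CommSemiring R] [Fintype ι] [DecidableEq ι]
    {κ : ι → Type*} [∀ i, Fintype (κ i)] [∀ i, DecidableEq (κ i)] (g : ∀ i, κ i → R)
    (t : ι) (y : κ t) :
    ∑ b ∈ univ.filter (fun b : ∀ i, κ i => b t = y), ∏ i, g i (b i) =
      g t y * ∏ i ∈ univ.erase t, ∑ z, g i z := by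
  rw [← Fintype.piFinset_univ, ← Fintype.piFinset_update_singleton_eq_filter_piFinset_eq _ t
    (mem_univ y), ← prod_univ_sum, ← mul_prod_erase univ _ (mem_univ t)]
  simp only [Function.update_self, sum_singleton]
  congr 1
  refine prod_congr rfl fun i hi => ?_
  rw [Function.update_of_ne (ne_of_mem_erase hi)]

section Chain

variable {V : Type*} [MeasurableSpace V] (ν : Measure V) {n : ℕ} {𝔄 𝔅 ℭ : Fin n → Type*}
  (A : ∀ s, V → 𝔄 s) (B : ∀ s, V → 𝔅 s) (C : ∀ s, V → ℭ s)

/-- `P(A_s = x, B_s = y) · P(C_s = c_s | A_s = x, B_s = y, C^{s-1} = c^{s-1})`. Where the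
denominator vanishes so does the joint mass, so the junk value `x / 0 = 0` does no harm. -/
def chainFactor (s : Fin n) (x : 𝔄 s) (y : 𝔅 s) (c : ∀ u : {u // u ≤ s}, ℭ u) : ℝ :=
  ν.real {v | A s v = x ∧ B s v = y} *
    (ν.real {v | A s v = x ∧ B s v = y ∧ ∀ u : {u // u ≤ s}, C u v = c u} /
      ν.real {v | A s v = x ∧ B s v = y ∧ ∀ u : {u // u < s}, C u v = c ⟨u, u.2.le⟩})

variable {ν A B C} [IsFiniteMeasure ν]

theorem measureReal_eq_prod_chainFactor
    (hAB : ∀ ab : ∀ s, 𝔄 s × 𝔅 s,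
      ν.real {v | ∀ s, (A s v, B s v) = ab s} = ∏ s, ν.real {v | (A s v, B s v) = ab s})
    (hC : ∀ s, CondIndepCross ν (C s) (fun v (u : {u // u ≠ s}) => (A u v, B u v))
      (fun v => (A s v, B s v, fun u : {u // u < s} => C u v)))
    (a : ∀ s, 𝔄 s) (b : ∀ s, 𝔅 s) (c : ∀ s, ℭ s) :
    ν.real {v | ∀ s, A s v = a s ∧ B s v = b s ∧ C s v = c s} =
      ∏ s, chainFactor ν A B C s (a s) (b s) (fun u => c u) := by
  classical
  set num : Fin n → ℝ := fun s =>
    ν.real {v | A s v = a s ∧ B s v = b s ∧ ∀ u : {u // u ≤ s}, C u v = c u}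
  set den : Fin n → ℝ := fun s =>
    ν.real {v | A s v = a s ∧ B s v = b s ∧ ∀ u : {u // u < s}, C u v = c u}
  set E : Fin (n + 1) → ℝ := fun k => ν.real {v | (∀ s, A s v = a s ∧ B s v = b s) ∧
    ∀ s : Fin n, s.castSucc < k → C s v = c s}
  have hstep (s : Fin n) : E s.succ * den s = num s * E s.castSucc := by
    convert hC s (c s) (fun u => (a u, b u)) (a s, b s, fun u => c u) using 3 <;> ext v <;>
      simp [funext_iff, Prod.ext_iff, Fin.castSucc_lt_succ_iff] <;> grind [le_iff_lt_or_eq]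
  have hprefix (k : Fin (n + 1)) :
      E k = (∏ s, ν.real {v | A s v = a s ∧ B s v = b s}) *
        ∏ s ∈ univ.filter (fun u : Fin n => u.castSucc < k), num s / den s := by
    induction k using Fin.induction with
    | zero =>
      simpa [E, Prod.ext_iff] using hAB fun s => (a s, b s)
    | succ s ih =>
      have hfilter : univ.filter (fun u : Fin n => u.castSucc < s.succ) =
          insert s (univ.filter (fun u : Fin n => u.castSucc < s.castSucc)) := by
        ext u; simp [Fin.castSucc_lt_succ_iff, le_iff_lt_or_eq, or_comm]
      have hE : E s.succ = E s.castSucc * (num s / den s) := by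
        rcases eq_or_ne (den s) 0 with h0 | h0
        · rw [h0, div_zero, mul_zero]
          refine measureReal_mono_null (fun v hv => ?_) h0
          simp only [Set.mem_ofPred_eq, Fin.castSucc_lt_succ_iff] at hv ⊢
          exact ⟨(hv.1 s).1, (hv.1 s).2, fun u => hv.2 u u.2.le⟩
        · rw [mul_div_assoc', eq_div_iff h0, hstep, mul_comm]
      rw [hE, ih, hfilter, prod_insert (by simp), mul_assoc, mul_comm (num s / den s)]
  have hlast :
      ν.real {v | ∀ s, A s v = a s ∧ B s v = b s ∧ C s v = c s} = E (Fin.last n) := by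
    congr 1; ext v; simp [forall_and, Fin.castSucc_lt_last, and_assoc]
  rw [hlast, hprefix, filter_true_of_mem fun s _ => Fin.castSucc_lt_last s,
    ← prod_mul_distrib]
  rfl

variable [DiscreteMeasurableSpace V] [∀ s, Fintype (𝔄 s)] [∀ s, Fintype (𝔅 s)]
  [∀ s, Fintype (ℭ s)]

theorem condIndepCross_B_AC
    (hAB : ∀ ab : ∀ s, 𝔄 s × 𝔅 s,
      ν.real {v | ∀ s, (A s v, B s v) = ab s} = ∏ s, ν.real {v | (A s v, B s v) = ab s})
    (hC : ∀ s, CondIndepCross ν (C s) (fun v (u : {u // u ≠ s}) => (A u v, B u v))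
      (fun v => (A s v, B s v, fun u : {u // u < s} => C u v)))
    (t : Fin n) :
    CondIndepCross ν (B t) (fun v => ((fun s => A s v), fun s => C s v))
      (fun v => (A t v, fun u : {u // u ≤ t} => C u v)) := by
  classical
  refine condIndepCross_of_measureReal_eq_mul
    (fun z : (∀ s, 𝔄 s) × (∀ s, ℭ s) => (z.1 t, fun u : {u // u ≤ t} => z.2 u))
    (fun y w => chainFactor ν A B C t w.1 y w.2)
    (fun z => ∏ s ∈ univ.erase t, ∑ y, chainFactor ν A B C s (z.1 s) y fun u => z.2 u)
    fun y ⟨a, c⟩ => ?_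
  calc ν.real {v | B t v = y ∧ ((fun s => A s v), fun s => C s v) = (a, c)}
      = ∑ b ∈ univ.filter (fun b : ∀ s, 𝔅 s => b t = y),
          ν.real {v | (fun s => B s v) = b ∧ ((fun s => A s v), fun s => C s v) = (a, c)} := by
        rw [sum_measureReal_fiber]; congr 1; ext v; simp
    _ = ∑ b ∈ univ.filter (fun b : ∀ s, 𝔅 s => b t = y),
          ∏ s, chainFactor ν A B C s (a s) (b s) fun u => c u := by
        refine sum_congr rfl fun b _ => ?_
        rw [← measureReal_eq_prod_chainFactor hAB hC]
        congr 1; ext v; simp [funext_iff, forall_and]; tauto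
    _ = _ := sum_filter_apply_eq_prod (fun s y => chainFactor ν A B C s (a s) y fun u => c u) t y

theorem condIndepCross_B_D {𝔇 : Fin n → Type*} [∀ s, Fintype (𝔇 s)] {D : ∀ s, V → 𝔇 s}
    (hAB : ∀ ab : ∀ s, 𝔄 s × 𝔅 s,
      ν.real {v | ∀ s, (A s v, B s v) = ab s} = ∏ s, ν.real {v | (A s v, B s v) = ab s})
    (hBD : CondIndepCross ν (fun v s => B s v) (fun v s => D s v)
      (fun v => ((fun s => A s v), fun s => C s v)))
    (hC : ∀ s, CondIndepCross ν (C s) (fun v (u : {u // u ≠ s}) => (A u v, B u v))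
      (fun v => (A s v, B s v, fun u : {u // u < s} => C u v)))
    (t : Fin n) :
    CondIndepCross ν (B t) (D t) (fun v => (A t v, fun u : {u // u ≤ t} => C u v)) :=
  (hBD.comp (· t) (· t)).coarsen
    (fun z : (∀ s, 𝔄 s) × (∀ s, ℭ s) => (z.1 t, fun u : {u // u ≤ t} => z.2 u))
    (condIndepCross_B_AC hAB hC t)

end Chain

theorem measurableSet_eq_pi {Ω ι : Type*} [MeasurableSpace Ω] [Countable ι] {𝔛 : ι → Type*}
    {X : ∀ i, Ω → 𝔛 i} (hX : ∀ i x, MeasurableSet {ω | X i ω = x}) (x : ∀ i, 𝔛 i) :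
    MeasurableSet {ω | (fun i => X i ω) = x} := by
  simpa only [funext_iff, Set.ofPred_forall] using MeasurableSet.iInter fun i => hX i (x i)

variable {Ω : Type*} [MeasurableSpace Ω] {n : ℕ}
  {𝔄 𝔅 ℭ 𝔇 : Fin n → Type*}
  [∀ t, Fintype (𝔄 t)] [∀ t, Fintype (𝔅 t)] [∀ t, Fintype (ℭ t)] [∀ t, Fintype (𝔇 t)]

/-- under (i) mutual independence of the pairs `(A_t, B_t)`,
(ii) `B^n — (A^n, C^n) — D^n`, and (iii) `C_t — (A_t, B_t, C^{t-1}) — (A^{n∖t}, B^{n∖t})`,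
one has the Markov chain `B_t — (A_t, C^t) — D_t` for each `t`. -/
theorem stmt12 (μ : Measure Ω) [IsProbabilityMeasure μ]
    (A : ∀ t, Ω → 𝔄 t) (B : ∀ t, Ω → 𝔅 t) (C : ∀ t, Ω → ℭ t) (D : ∀ t, Ω → 𝔇 t)
    (hAm : ∀ t a, MeasurableSet {ω | A t ω = a})
    (hBm : ∀ t b, MeasurableSet {ω | B t ω = b})
    (hCm : ∀ t c, MeasurableSet {ω | C t ω = c})
    (hDm : ∀ t d, MeasurableSet {ω | D t ω = d})
    (hi : ∀ (T : Finset (Fin n)) (ab : ∀ t, 𝔄 t × 𝔅 t),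
      (μ {ω | ∀ t ∈ T, (A t ω, B t ω) = ab t}).toReal =
        ∏ t ∈ T, (μ {ω | (A t ω, B t ω) = ab t}).toReal)
    (hii : CondIndepRV μ (fun ω (t : Fin n) => B t ω) (fun ω (t : Fin n) => D t ω)
      (fun ω => ((fun t => A t ω), (fun t => C t ω))))
    (hiii : ∀ t : Fin n, CondIndepRV μ (C t)
      (fun ω => fun s : {s : Fin n // s ≠ t} => (A s.1 ω, B s.1 ω))
      (fun ω => (A t ω, B t ω, fun s : {s : Fin n // s < t} => C s.1 ω))) :
    ∀ t : Fin n, CondIndepRV μ (B t) (D t)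
      (fun ω => (A t ω, fun s : {s : Fin n // s ≤ t} => C s.1 ω)) := by
  -- Work with the law of all the variables on the finite space of their values.
  let 𝕍 := (∀ t, 𝔄 t) × (∀ t, 𝔅 t) × (∀ t, ℭ t) × (∀ t, 𝔇 t)
  let _ : MeasurableSpace 𝕍 := ⊤
  let F : Ω → 𝕍 := fun ω => (fun t => A t ω, fun t => B t ω, fun t => C t ω, fun t => D t ω)
  have hF : Measurable F := measurable_to_countable' fun v => by
    simpa only [Set.preimage, Set.mem_singleton_iff, F, 𝕍, Prod.ext_iff, Set.ofPred_and] using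
      (measurableSet_eq_pi hAm v.1).inter <| (measurableSet_eq_pi hBm v.2.1).inter <|
        (measurableSet_eq_pi hCm v.2.2.1).inter (measurableSet_eq_pi hDm v.2.2.2)
  have hAB (ab : ∀ t, 𝔄 t × 𝔅 t) : (μ.map F).real {v | ∀ s, (v.1 s, v.2.1 s) = ab s} =
      ∏ s, (μ.map F).real {v | (v.1 s, v.2.1 s) = ab s} := by
    simpa [map_measureReal_apply hF .of_discrete, measureReal_def] using hi univ ab
  intro t
  exact (condIndepRV_comp_iff_condIndepCross_map μ hF _ _ _).2 <|
    condIndepCross_B_D (A := fun s (v : 𝕍) => v.1 s) (B := fun s (v : 𝕍) => v.2.1 s)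
      (C := fun s (v : 𝕍) => v.2.2.1 s) (D := fun s (v : 𝕍) => v.2.2.2 s) hAB
      ((condIndepRV_comp_iff_condIndepCross_map μ hF _ _ _).1 hii)
      (fun s => (condIndepRV_comp_iff_condIndepCross_map μ hF _ _ _).1 (hiii s)) t
end
end

section
/- For every λ ≥ 0 and every fixed finite nonempty set 𝒰, the minimum of I(X_S ∧ Y | S, U) + λ E[d(X, Y)] over all triples (P_U, σ, W) of a pmf P_U on 𝒰, a sampler kernel σ, and a reconstruction kernel W equals the minimum of the same objective restricted to triples in which σ is a conditional point-mass sampler, i.e., σ(A|x,u) = 1(A = h(x,u)) for some map h : 𝒳_ℳ × 𝒰 → 𝒜_k. -/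
/-!
Conditional mutual information is the average over `(U, X, S)` of the divergence of
`W(·|S, X_S, U)` from the law of `Y` given `(U, S)`, so the objective is the expectation of a cost
`c(x, u, A)` under the sampler. Freeze these output laws at those of a given sampler `σ`: the
expectation over `S ~ σ(·|x, u)` is at least the cost at some set `h(x, u)` charged by `σ`, so the
point-mass sampler `h` does no worse. Replacing the frozen output laws by the true ones of `h` only
lowers the cost, because the true output law minimizes the averaged divergence. Thus each value of
the objective is dominated by a value attained by a point-mass sampler, which gives equality of the
infima (also when the sets are unbounded below, where both infima are `0` by convention).
-/

noncomputable section

/-- A probability mass function on a finite type. -/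
def IsPMF {T : Type*} [Fintype T] (p : T → ℝ) : Prop :=
  (∀ t, 0 ≤ p t) ∧ ∑ t, p t = 1

/-- Mutual information of a joint pmf `Q` on a product of two finite types;
terms with `Q p = 0` vanish since `0 * log _ = 0`. -/
def mutInfo {α β : Type*} [Fintype α] [Fintype β] (Q : α × β → ℝ) : ℝ :=
  ∑ p : α × β, Q p * Real.log (Q p / ((∑ b, Q (p.1, b)) * (∑ a, Q (a, p.2))))

/-- The family `𝒜_k` of `k`-element subsets of `{1, …, m}`. -/
abbrev SetsK (m k : ℕ) := {A : Finset (Fin m) // A.card = k}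

variable {m : ℕ} {X : Fin m → Type} [∀ i, Fintype (X i)] [∀ i, DecidableEq (X i)]
  [∀ i, Nonempty (X i)] {Y : Type} [Fintype Y] [Nonempty Y]

/-- Restriction of `x ∈ 𝒳_ℳ` to the coordinates in `A`. -/
def restr (A : Finset (Fin m)) (x : ∀ i, X i) : ∀ i : A, X i.1 := fun i => x i.1

/-- The marginal pmf `P_{X_A}` of the coordinates in `A`. -/
def margA (P : (∀ i, X i) → ℝ) (A : Finset (Fin m)) (xA : ∀ i : A, X i.1) : ℝ :=
  ∑ x : ∀ i, X i, if restr A x = xA then P x else 0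

/-- The modified distortion `d_A(x_A, y)`. -/
def dAk (P : (∀ i, X i) → ℝ) (d : (∀ i, X i) → Y → ℝ) (A : Finset (Fin m))
    (xA : ∀ i : A, X i.1) (y : Y) : ℝ :=
  (∑ x : ∀ i, X i, if restr A x = xA then P x * d x y else 0) / margA P A xA

/-- The fixed-set rate distortion function `R_A(Δ)`: the minimum of `I(X_A ∧ Y)` over
joint pmfs of `(X_A, Y)` with first marginal `P_{X_A}` and `E[d_A(X_A,Y)] ≤ Δ`. -/
def RAk (P : (∀ i, X i) → ℝ) (d : (∀ i, X i) → Y → ℝ) (A : Finset (Fin m)) (Δ : ℝ) : ℝ :=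
  sInf {r | ∃ Q : (∀ i : A, X i.1) × Y → ℝ, IsPMF Q ∧
    (∀ xA, ∑ y, Q (xA, y) = margA P A xA) ∧
    (∑ p : (∀ i : A, X i.1) × Y, Q p * dAk P d A p.1 p.2) ≤ Δ ∧ mutInfo Q = r}

/-- `Δ_min,A = Σ_{x_A} P_{X_A}(x_A) min_y d_A(x_A, y)`. -/
def DminA (P : (∀ i, X i) → ℝ) (d : (∀ i, X i) → Y → ℝ) (A : Finset (Fin m)) : ℝ :=
  ∑ xA : ∀ i : A, X i.1,
    margA P A xA * Finset.univ.inf' Finset.univ_nonempty (fun y => dAk P d A xA y)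

variable {U : Type} [Fintype U]

/-- A memoryless sampler kernel `σ(·|x, u)`: a pmf on `𝒜_k` for each `(x, u)`. -/
def IsSamplerU (k : ℕ) (σ : (∀ i, X i) → U → SetsK m k → ℝ) : Prop :=
  ∀ x u, IsPMF (σ x u)

/-- A reconstruction kernel `W(·|A, x_A, u)`: a pmf on `𝒴` for each `(A, x_A, u)`. -/
def IsKernelWU (k : ℕ) (W : ∀ A : SetsK m k, (∀ i : A.1, X i.1) → U → Y → ℝ) : Prop :=
  ∀ A xA u, IsPMF (W A xA u)

/-- `Pr(U = u, S = A)` under the joint pmf `P_U(u) P(x) σ(A|x,u) W(y|A,x_A,u)`. -/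
def prSU (k : ℕ) (P : (∀ i, X i) → ℝ) (PU : U → ℝ)
    (σ : (∀ i, X i) → U → SetsK m k → ℝ) (u : U) (A : SetsK m k) : ℝ :=
  PU u * ∑ x, P x * σ x u A

/-- The conditional joint pmf of `(X_A, Y)` given `S = A, U = u`. -/
def condQU (k : ℕ) (P : (∀ i, X i) → ℝ) (PU : U → ℝ)
    (σ : (∀ i, X i) → U → SetsK m k → ℝ)
    (W : ∀ A : SetsK m k, (∀ i : A.1, X i.1) → U → Y → ℝ)
    (u : U) (A : SetsK m k) : (∀ i : A.1, X i.1) × Y → ℝ := fun p =>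
  (∑ x, if restr A.1 x = p.1 then PU u * P x * σ x u A * W A p.1 u p.2 else 0) /
    prSU k P PU σ u A

/-- The conditional mutual information
`I(X_S ∧ Y | S, U) = Σ_{u,A} Pr(U = u, S = A) I_{u,A}`. -/
def condMIU (k : ℕ) (P : (∀ i, X i) → ℝ) (PU : U → ℝ)
    (σ : (∀ i, X i) → U → SetsK m k → ℝ)
    (W : ∀ A : SetsK m k, (∀ i : A.1, X i.1) → U → Y → ℝ) : ℝ :=
  ∑ u : U, ∑ A : SetsK m k, prSU k P PU σ u A * mutInfo (condQU k P PU σ W u A)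

/-- The expected distortion `E[d(X,Y)]` under the joint pmf
`P_U(u) P(x) σ(A|x,u) W(y|A,x_A,u)`. -/
def expDistMRS (k : ℕ) (P : (∀ i, X i) → ℝ) (d : (∀ i, X i) → Y → ℝ) (PU : U → ℝ)
    (σ : (∀ i, X i) → U → SetsK m k → ℝ)
    (W : ∀ A : SetsK m k, (∀ i : A.1, X i.1) → U → Y → ℝ) : ℝ :=
  ∑ u : U, ∑ x : ∀ i, X i, ∑ A : SetsK m k, ∑ y,
    PU u * P x * σ x u A * W A (restr A.1 x) u y * d x y

open Finset Real

section Generic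

variable {α β γ : Type*} [Fintype α] [Fintype β] [Fintype γ]

def relEntropy (p q : γ → ℝ) : ℝ :=
  ∑ y, p y * log (p y / q y)

/-- The output law of the channel `K` when the input is drawn with weights proportional to `w`. -/
def outMarg (w : α → ℝ) (K : α → γ → ℝ) (y : γ) : ℝ :=
  (∑ x, w x * K x y) / ∑ x, w x

theorem sub_le_mul_log_div {a b : ℝ} (ha : 0 ≤ a) (hb : 0 ≤ b) (hab : a ≠ 0 → b ≠ 0) :
    a - b ≤ a * log (a / b) := by
  rcases ha.eq_or_lt with rfl | ha
  · simpa using hb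
  have hb : 0 < b := hb.lt_of_ne' (hab ha.ne')
  have h := one_sub_inv_le_log_of_pos (div_pos ha hb)
  rw [inv_div] at h
  calc a - b = a * (1 - b / a) := by field_simp
    _ ≤ a * log (a / b) := mul_le_mul_of_nonneg_left h ha.le

theorem relEntropy_nonneg {p q : γ → ℝ} (hp : ∀ y, 0 ≤ p y) (hq : ∀ y, 0 ≤ q y)
    (hpq : ∑ y, q y ≤ ∑ y, p y) (hsupp : ∀ y, p y ≠ 0 → q y ≠ 0) : 0 ≤ relEntropy p q := by
  calc (0 : ℝ) ≤ ∑ y, p y - ∑ y, q y := sub_nonneg.2 hpq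
    _ ≤ relEntropy p q := by
      rw [← sum_sub_distrib]
      exact sum_le_sum fun y _ => sub_le_mul_log_div (hp y) (hq y) (hsupp y)

theorem sum_ite_comp_eq [DecidableEq β] (r : α → β) (f : α → β → ℝ) :
    ∑ b, ∑ x, (if r x = b then f x b else 0) = ∑ x, f x (r x) := by
  rw [sum_comm]
  simp

theorem sum_outMarg {w : α → ℝ} (hw : ∑ x, w x ≠ 0) {K : α → γ → ℝ} (hK : ∀ x, ∑ y, K x y = 1) :
    ∑ y, outMarg w K y = 1 := by
  simp only [outMarg, ← sum_div]
  rw [sum_comm]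
  simp [← mul_sum, hK, hw]

theorem sum_outMarg_le_one (w : α → ℝ) {K : α → γ → ℝ} (hK : ∀ x, ∑ y, K x y = 1) :
    ∑ y, outMarg w K y ≤ 1 := by
  by_cases hw : ∑ x, w x = 0
  · simp [outMarg, hw]
  · exact (sum_outMarg hw hK).le

omit [Fintype γ] in
theorem outMarg_pos {w : α → ℝ} (hw : ∀ x, 0 ≤ w x) {K : α → γ → ℝ} (hK : ∀ x y, 0 ≤ K x y)
    {x : α} {y : γ} (hwx : w x ≠ 0) (hKxy : K x y ≠ 0) : 0 < outMarg w K y := by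
  have hwx : 0 < w x := (hw x).lt_of_ne' hwx
  have hKxy : 0 < K x y := (hK x y).lt_of_ne' hKxy
  refine div_pos ?_ ?_
  · exact (mul_pos hwx hKxy).trans_le
      (single_le_sum (fun x _ => mul_nonneg (hw x) (hK x y)) (mem_univ x))
  · exact hwx.trans_le (single_le_sum (fun x _ => hw x) (mem_univ x))

theorem mutInfo_mul_kernel (p : β → ℝ) {K : β → γ → ℝ} (hK : ∀ b, ∑ y, K b y = 1) :
    mutInfo (fun z : β × γ => p z.1 * K z.1 z.2) =
      ∑ b, p b * relEntropy (K b) (fun y => ∑ a, p a * K a y) := by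
  unfold mutInfo relEntropy
  rw [Fintype.sum_prod_type]
  refine sum_congr rfl fun b _ => ?_
  dsimp only
  rw [← mul_sum, hK, mul_one, mul_sum]
  refine sum_congr rfl fun y _ => ?_
  rcases eq_or_ne (p b) 0 with hp | hp
  · simp [hp]
  · rw [mul_div_mul_left _ _ hp, mul_assoc]

/-- Conditioning on a function `r` of the input: `Q` is the joint law of `(r X, Y)` when `X` has
weights `w` and `Y` is drawn from `K (r X)`. -/
theorem sum_mul_mutInfo_eq [DecidableEq β] (r : α → β) {w : α → ℝ} (hw : ∀ x, 0 ≤ w x)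
    {K : β → γ → ℝ} (hK : ∀ b, ∑ y, K b y = 1) :
    (∑ x, w x) * mutInfo (fun z : β × γ =>
        (∑ x, if r x = z.1 then w x * K z.1 z.2 else 0) / ∑ x, w x) =
      ∑ x, w x * relEntropy (K (r x)) (outMarg w fun x => K (r x)) := by
  set Z := ∑ x, w x
  rcases eq_or_ne Z 0 with hZ | hZ
  · have hw0 : ∀ x, w x = 0 := fun x =>
      (sum_eq_zero_iff_of_nonneg fun x _ => hw x).mp hZ x (mem_univ x)
    simp [hZ, hw0]
  set p : β → ℝ := fun b => (∑ x, if r x = b then w x else 0) / Z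
  have hQ : (fun z : β × γ => (∑ x, if r x = z.1 then w x * K z.1 z.2 else 0) / Z) =
      fun z => p z.1 * K z.1 z.2 := by
    ext z
    simp only [p, div_mul_eq_mul_div, sum_mul, ite_mul, zero_mul]
  have hV : (fun y => ∑ b, p b * K b y) = outMarg w fun x => K (r x) := by
    ext y
    simp only [p, outMarg, div_mul_eq_mul_div, ← sum_div, sum_mul, ite_mul, zero_mul]
    rw [sum_ite_comp_eq r fun x b => w x * K b y]
  rw [hQ, mutInfo_mul_kernel p hK, hV, mul_sum]
  simp only [p, ← mul_assoc, mul_div_cancel₀ _ hZ, sum_mul, ite_mul, zero_mul]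
  exact sum_ite_comp_eq r fun x b => w x * relEntropy (K b) (outMarg w fun x => K (r x))

/-- The "golden formula": the output law minimizes the averaged divergence. -/
theorem sum_mul_relEntropy_outMarg_le {w : α → ℝ} (hw : ∀ x, 0 ≤ w x) {K : α → γ → ℝ}
    (hK : ∀ x y, 0 ≤ K x y) (hK1 : ∀ x, ∑ y, K x y = 1) {q : γ → ℝ} (hq : ∀ y, 0 ≤ q y)
    (hq1 : ∑ y, q y ≤ 1) (hsupp : ∀ x y, w x ≠ 0 → K x y ≠ 0 → q y ≠ 0) :
    ∑ x, w x * relEntropy (K x) (outMarg w K) ≤ ∑ x, w x * relEntropy (K x) q := by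
  set Z := ∑ x, w x
  set V := outMarg w K
  rcases eq_or_ne Z 0 with hZ | hZ
  · have hw0 : ∀ x, w x = 0 := fun x =>
      (sum_eq_zero_iff_of_nonneg fun x _ => hw x).mp hZ x (mem_univ x)
    simp [hw0]
  have hZpos : 0 < Z := (sum_nonneg fun x _ => hw x).lt_of_ne' hZ
  have hV : ∀ y, 0 ≤ V y := fun y =>
    div_nonneg (sum_nonneg fun x _ => mul_nonneg (hw x) (hK x y)) hZpos.le
  have hsplit : ∀ x y, w x * (K x y * log (K x y / q y)) =
      w x * (K x y * log (K x y / V y)) + w x * K x y * log (V y / q y) := by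
    intro x y
    rcases eq_or_ne (w x) 0 with hwx | hwx
    · simp [hwx]
    rcases eq_or_ne (K x y) 0 with hKxy | hKxy
    · simp [hKxy]
    have hVy := (outMarg_pos hw hK hwx hKxy).ne'
    rw [log_div hKxy (hsupp x y hwx hKxy), log_div hKxy hVy, log_div hVy (hsupp x y hwx hKxy)]
    ring
  have hmass : ∀ y, ∑ x, w x * K x y = Z * V y := fun y => (mul_div_cancel₀ _ hZ).symm
  have hsupp' : ∀ y, V y ≠ 0 → q y ≠ 0 := by
    intro y hVy
    obtain ⟨x, -, hx⟩ := exists_ne_zero_of_sum_ne_zero (mul_ne_zero hZ hVy ∘ (hmass y).symm.trans)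
    exact hsupp x y (left_ne_zero_of_mul hx) (right_ne_zero_of_mul hx)
  have hgibbs : 0 ≤ ∑ y, Z * V y * log (V y / q y) := by
    simp only [mul_assoc, ← mul_sum]
    exact mul_nonneg hZpos.le (relEntropy_nonneg hV hq (by rwa [sum_outMarg hZ hK1]) hsupp')
  simp only [relEntropy, mul_sum]
  rw [sum_congr rfl fun x _ => sum_congr rfl fun y _ => hsplit x y]
  simp only [sum_add_distrib]
  rw [sum_comm (f := fun x y => w x * K x y * log (V y / q y))]
  simp only [← sum_mul, hmass]
  linarith

theorem IsPMF.exists_pos_le_sum_mul {p : α → ℝ} (hp : IsPMF p) (c : α → ℝ) :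
    ∃ t, 0 < p t ∧ c t ≤ ∑ t, p t * c t := by
  set E := ∑ t, p t * c t
  by_contra! h
  obtain ⟨t₀, -, ht₀⟩ := exists_ne_zero_of_sum_ne_zero (hp.2.trans_ne one_ne_zero)
  have hpos : 0 < p t₀ := (hp.1 t₀).lt_of_ne' ht₀
  have hlt : ∑ t, p t * E < E := by
    refine sum_lt_sum (fun t _ => ?_) ⟨t₀, mem_univ t₀, mul_lt_mul_of_pos_left (h t₀ hpos) hpos⟩
    rcases (hp.1 t).eq_or_lt with ht | ht
    · simp [← ht]
    · exact mul_le_mul_of_nonneg_left (h t ht).le ht.le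
  rw [← sum_mul, hp.2, one_mul] at hlt
  exact hlt.false

end Generic

section PointSampler

omit [∀ i, Fintype (X i)] [∀ i, DecidableEq (X i)] [∀ i, Nonempty (X i)] [Fintype U]

def pointSampler {k : ℕ} (h : (∀ i, X i) → U → SetsK m k) : (∀ i, X i) → U → SetsK m k → ℝ :=
  fun x u A => if A = h x u then 1 else 0

theorem isSamplerU_pointSampler {k : ℕ} (h : (∀ i, X i) → U → SetsK m k) :
    IsSamplerU k (pointSampler h) := fun x u =>
  ⟨fun A => by unfold pointSampler; split_ifs <;> norm_num, by simp [pointSampler]⟩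

end PointSampler

section Sampling

omit [∀ i, Nonempty (X i)] [Nonempty Y]

variable {k : ℕ} (P : (∀ i, X i) → ℝ) (d : (∀ i, X i) → Y → ℝ) (lam : ℝ) (PU : U → ℝ)
  (W : ∀ A : SetsK m k, (∀ i : A.1, X i.1) → U → Y → ℝ)

/-- The law of `Y` given `(U, S) = (u, A)`. -/
def outputLaw (σ : (∀ i, X i) → U → SetsK m k → ℝ) (u : U) (A : SetsK m k) : Y → ℝ :=
  outMarg (fun x => PU u * P x * σ x u A) fun x => W A (restr A.1 x) u

/-- The cost of choosing `S = A` given `(X, U) = (x, u)`, when the output law given `(U, S)` is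
replaced by the reference law `ρ`. -/
def lagrCost (ρ : U → SetsK m k → Y → ℝ) (x : ∀ i, X i) (u : U) (A : SetsK m k) : ℝ :=
  relEntropy (W A (restr A.1 x) u) (ρ u A) + lam * ∑ y, W A (restr A.1 x) u y * d x y

def expLagrCost (σ : (∀ i, X i) → U → SetsK m k → ℝ) (ρ : U → SetsK m k → Y → ℝ) : ℝ :=
  ∑ u, ∑ x, ∑ A, PU u * P x * σ x u A * lagrCost d lam W ρ x u A

variable {P PU W}

theorem condMIU_eq_sum_relEntropy (hP : ∀ x, 0 ≤ P x) (hPU : ∀ u, 0 ≤ PU u)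
    {σ : (∀ i, X i) → U → SetsK m k → ℝ} (hσ : IsSamplerU k σ) (hW : IsKernelWU k W) :
    condMIU k P PU σ W = ∑ u, ∑ x, ∑ A,
      PU u * P x * σ x u A * relEntropy (W A (restr A.1 x) u) (outputLaw P PU W σ u A) := by
  unfold condMIU
  refine sum_congr rfl fun u _ => ?_
  rw [sum_comm]
  refine sum_congr rfl fun A _ => ?_
  have hprSU : prSU k P PU σ u A = ∑ x, PU u * P x * σ x u A := by
    simp only [prSU, mul_sum, mul_assoc]
  unfold condQU
  rw [hprSU]
  exact sum_mul_mutInfo_eq (w := fun x => PU u * P x * σ x u A) (K := fun xA => W A xA u)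
    (restr A.1) (fun x => mul_nonneg (mul_nonneg (hPU u) (hP x)) ((hσ x u).1 A))
    fun xA => (hW A xA u).2

theorem lagrangian_eq_expLagrCost (hP : ∀ x, 0 ≤ P x) (hPU : ∀ u, 0 ≤ PU u)
    {σ : (∀ i, X i) → U → SetsK m k → ℝ} (hσ : IsSamplerU k σ) (hW : IsKernelWU k W) :
    condMIU k P PU σ W + lam * expDistMRS k P d PU σ W =
      expLagrCost P d lam PU W σ (outputLaw P PU W σ) := by
  rw [condMIU_eq_sum_relEntropy hP hPU hσ hW, expDistMRS]
  simp only [expLagrCost, lagrCost, mul_sum, ← sum_add_distrib]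
  refine sum_congr rfl fun u _ => sum_congr rfl fun x _ => sum_congr rfl fun A _ => ?_
  rw [mul_add, mul_sum]
  congr 1
  exact sum_congr rfl fun y _ => by ring

omit [∀ i, DecidableEq (X i)] in
theorem expLagrCost_outputLaw_le (hP : ∀ x, 0 ≤ P x) (hPU : ∀ u, 0 ≤ PU u)
    {τ σ : (∀ i, X i) → U → SetsK m k → ℝ} (hτ : IsSamplerU k τ) (hσ : IsSamplerU k σ)
    (hτσ : ∀ x u A, τ x u A ≠ 0 → 0 < σ x u A) (hW : IsKernelWU k W) :
    expLagrCost P d lam PU W τ (outputLaw P PU W τ) ≤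
      expLagrCost P d lam PU W τ (outputLaw P PU W σ) := by
  have hw : ∀ (κ : (∀ i, X i) → U → SetsK m k → ℝ), IsSamplerU k κ → ∀ u A x,
      0 ≤ PU u * P x * κ x u A := fun κ hκ u A x =>
    mul_nonneg (mul_nonneg (hPU u) (hP x)) ((hκ x u).1 A)
  simp only [expLagrCost, lagrCost, mul_add, sum_add_distrib]
  gcongr ?_ + _
  refine sum_le_sum fun u _ => ?_
  rw [sum_comm, sum_comm (f := fun x A => _ * relEntropy _ (outputLaw P PU W σ u A))]
  refine sum_le_sum fun A _ => ?_
  refine sum_mul_relEntropy_outMarg_le (hw τ hτ u A) (fun x => (hW A _ u).1)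
    (fun x => (hW A _ u).2) (fun y => div_nonneg ?_ ?_) (sum_outMarg_le_one _ fun x => (hW A _ u).2)
    fun x y hx hy => (outMarg_pos (hw σ hσ u A) (fun x => (hW A _ u).1) ?_ hy).ne'
  · exact sum_nonneg fun x _ => mul_nonneg (hw σ hσ u A x) ((hW A _ u).1 y)
  · exact sum_nonneg fun x _ => hw σ hσ u A x
  · obtain ⟨hPUP, hτx⟩ := mul_ne_zero_iff.mp hx
    exact mul_ne_zero hPUP (hτσ x u A hτx).ne'

omit [∀ i, DecidableEq (X i)] in
theorem expLagrCost_pointSampler_le (hP : ∀ x, 0 ≤ P x) (hPU : ∀ u, 0 ≤ PU u)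
    (σ : (∀ i, X i) → U → SetsK m k → ℝ) (ρ : U → SetsK m k → Y → ℝ)
    {h : (∀ i, X i) → U → SetsK m k}
    (hh : ∀ x u, lagrCost d lam W ρ x u (h x u) ≤ ∑ A, σ x u A * lagrCost d lam W ρ x u A) :
    expLagrCost P d lam PU W (pointSampler h) ρ ≤ expLagrCost P d lam PU W σ ρ := by
  unfold expLagrCost
  refine sum_le_sum fun u _ => sum_le_sum fun x _ => ?_
  simp only [mul_assoc, ← mul_sum]
  refine mul_le_mul_of_nonneg_left (mul_le_mul_of_nonneg_left ?_ (hP x)) (hPU u)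
  simpa [pointSampler] using hh x u

theorem exists_pointSampler_lagrangian_le (hP : ∀ x, 0 ≤ P x) (hPU : ∀ u, 0 ≤ PU u)
    {σ : (∀ i, X i) → U → SetsK m k → ℝ} (hσ : IsSamplerU k σ) (hW : IsKernelWU k W) :
    ∃ h, condMIU k P PU (pointSampler h) W + lam * expDistMRS k P d PU (pointSampler h) W ≤
      condMIU k P PU σ W + lam * expDistMRS k P d PU σ W := by
  choose h hpos hmin using fun x u =>
    (hσ x u).exists_pos_le_sum_mul (lagrCost d lam W (outputLaw P PU W σ) x u)
  have hsupp : ∀ x u A, pointSampler h x u A ≠ 0 → 0 < σ x u A := fun x u A hA => by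
    by_cases hAh : A = h x u
    · exact hAh ▸ hpos x u
    · simp [pointSampler, hAh] at hA
  refine ⟨h, ?_⟩
  rw [lagrangian_eq_expLagrCost d lam hP hPU (isSamplerU_pointSampler h) hW,
    lagrangian_eq_expLagrCost d lam hP hPU hσ hW]
  calc _ ≤ expLagrCost P d lam PU W (pointSampler h) (outputLaw P PU W σ) :=
        expLagrCost_outputLaw_le d lam hP hPU (isSamplerU_pointSampler h) hσ hsupp hW
    _ ≤ _ := expLagrCost_pointSampler_le d lam hP hPU σ _ hmin

end Sampling

theorem stmt14_general (k : ℕ) (P : (∀ i, X i) → ℝ) (hP : IsPMF P)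
    (d : (∀ i, X i) → Y → ℝ) (lam : ℝ) :
    sInf {r | ∃ (PU : U → ℝ) (σ : (∀ i, X i) → U → SetsK m k → ℝ)
        (W : ∀ A : SetsK m k, (∀ i : A.1, X i.1) → U → Y → ℝ),
        IsPMF PU ∧ IsSamplerU k σ ∧ IsKernelWU k W ∧
        condMIU k P PU σ W + lam * expDistMRS k P d PU σ W = r} =
    sInf {r | ∃ (PU : U → ℝ) (h : (∀ i, X i) → U → SetsK m k)
        (W : ∀ A : SetsK m k, (∀ i : A.1, X i.1) → U → Y → ℝ),
        IsPMF PU ∧ IsKernelWU k W ∧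
        condMIU k P PU (fun x u A => if A = h x u then 1 else 0) W +
          lam * expDistMRS k P d PU (fun x u A => if A = h x u then 1 else 0) W = r} := by
  refine csInf_eq_csInf_of_forall_exists_le ?_ ?_
  · rintro _ ⟨PU, σ, W, hPU, hσ, hW, rfl⟩
    obtain ⟨h, hle⟩ := exists_pointSampler_lagrangian_le d lam hP.1 hPU.1 hσ hW
    exact ⟨_, ⟨PU, h, W, hPU, hW, rfl⟩, hle⟩
  · rintro _ ⟨PU, h, W, hPU, hW, rfl⟩
    exact ⟨_, ⟨PU, pointSampler h, W, hPU, isSamplerU_pointSampler h, hW, rfl⟩, le_rfl⟩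

/-- for every `λ ≥ 0` the Lagrangian minimum of
`I(X_S ∧ Y | S,U) + λ E[d(X,Y)]` over all triples `(P_U, σ, W)` equals the minimum
over triples whose sampler is a conditional point-mass `σ(A|x,u) = 1(A = h(x,u))`. -/
theorem stmt14 (k : ℕ) (hk1 : 1 ≤ k) (hkm : k ≤ m) [Nonempty U]
    (P : (∀ i, X i) → ℝ) (hP : IsPMF P) (hfull : ∀ x, 0 < P x)
    (d : (∀ i, X i) → Y → ℝ) (hd : ∀ x y, 0 ≤ d x y) (lam : ℝ) (hlam : 0 ≤ lam) :
    sInf {r | ∃ (PU : U → ℝ) (σ : (∀ i, X i) → U → SetsK m k → ℝ)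
        (W : ∀ A : SetsK m k, (∀ i : A.1, X i.1) → U → Y → ℝ),
        IsPMF PU ∧ IsSamplerU k σ ∧ IsKernelWU k W ∧
        condMIU k P PU σ W + lam * expDistMRS k P d PU σ W = r} =
    sInf {r | ∃ (PU : U → ℝ) (h : (∀ i, X i) → U → SetsK m k)
        (W : ∀ A : SetsK m k, (∀ i : A.1, X i.1) → U → Y → ℝ),
        IsPMF PU ∧ IsKernelWU k W ∧
        condMIU k P PU (fun x u A => if A = h x u then 1 else 0) W +
          lam * expDistMRS k P d PU (fun x u A => if A = h x u then 1 else 0) W = r} :=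
  stmt14_general k P hP d lam
end
end

section
/- Let 𝒰 = {1, 2, 3}. For every Δ with Δ_min ≤ Δ ≤ Δ_max, the minimum of I(X_S ∧ Y | S, U) over all triples (P_U, σ, W) with E[d(X, Y)] ≤ Δ equals the minimum of I(X_S ∧ Y | S, U) over triples (P_U, σ, W) with E[d(X, Y)] ≤ Δ in which σ is a conditional point-mass sampler σ(A|x,u) = 1(A = h(x,u)) for some map h : 𝒳_ℳ × 𝒰 → 𝒜_k. Here Δ_min is the minimum over sampler kernels σ(·|x) on 𝒜_k of Σ_{A} Σ_{x_A-values} min_{y ∈ 𝒴} Σ_{x : x restricted to A equals x_A} P(x) σ(A|x) d(x, y), and Δ_max is the minimum over sampler kernels σ(·|x) of Σ_A Pr(S = A) min_{y ∈ 𝒴} E[d(X, y) | S = A]. -/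
/-!
Given `U = u`, a sampler kernel is the mixture of the point-mass samplers `g`, with weights
`∏ₓ σ(g x | x, u)`. In the sampler, the expected distortion is linear and the conditional mutual
information is concave (mutual information is concave in the input law for a fixed channel), so
the pair (distortion, information) of any configuration dominates a convex combination of the
pairs of the point-mass slices `(u, g)`. By Carathéodory's theorem in `ℝ²`, three of these slices
suffice, and they form a configuration with `𝒰 = {1, 2, 3}`.
-/

noncomputable section

variable {m : ℕ} {X : Fin m → Type} [∀ i, Fintype (X i)] [∀ i, DecidableEq (X i)]
  [∀ i, Nonempty (X i)] {Y : Type} [Fintype Y] [Nonempty Y]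

variable {U : Type} [Fintype U]

open Finset

theorem Real.sInf_eq_of_subset_of_forall_exists_le {s t : Set ℝ} (hst : s ⊆ t)
    (h : ∀ b ∈ t, ∃ a ∈ s, a ≤ b) : sInf s = sInf t := by
  rcases t.eq_empty_or_nonempty with rfl | ht
  · rw [Set.subset_empty_iff.mp hst]
  obtain ⟨b, hb⟩ := ht
  have hs : s.Nonempty := let ⟨a, ha, _⟩ := h b hb; ⟨a, ha⟩
  by_cases hbdd : BddBelow t
  · refine le_antisymm (le_csInf ⟨b, hb⟩ fun b hb => ?_) (csInf_le_csInf hbdd hs hst)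
    obtain ⟨a, ha, hab⟩ := h b hb
    exact (csInf_le (hbdd.mono hst) ha).trans hab
  · have hs_bdd : ¬BddBelow s := fun ⟨L, hL⟩ =>
      hbdd ⟨L, fun b hb => let ⟨a, ha, hab⟩ := h b hb; (hL ha).trans hab⟩
    rw [Real.sInf_of_not_bddBelow hbdd, Real.sInf_of_not_bddBelow hs_bdd]

/-- Carathéodory's theorem, with the vertices indexed by `Fin n` (repeated vertices and zero
weights allowed). -/
theorem exists_fin_convex_combination {E ι : Type*} [AddCommGroup E] [Module ℝ E]
    [FiniteDimensional ℝ E] [Fintype ι] {n : ℕ} (hn : Module.finrank ℝ E < n) (F : ι → E)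
    {q : ι → ℝ} (hq0 : ∀ i, 0 ≤ q i) (hq1 : ∑ i, q i = 1) :
    ∃ (μ : Fin n → ℝ) (v : Fin n → ι),
      (∀ j, 0 ≤ μ j) ∧ ∑ j, μ j = 1 ∧ ∑ j, μ j • F (v j) = ∑ i, q i • F i := by
  have hmem : ∑ i, q i • F i ∈ convexHull ℝ (Set.range F) :=
    (convex_convexHull ℝ _).sum_mem (fun i _ => hq0 i) hq1
      fun i _ => subset_convexHull ℝ _ (Set.mem_range_self i)
  obtain ⟨κ, _, z, w, hz, hind, hw0, hw1, hwz⟩ := eq_pos_convex_span_of_mem_convexHull hmem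
  choose v₀ hv₀ using fun i => hz (Set.mem_range_self i)
  have hcard : Fintype.card κ ≤ n := by
    have hspan := hind.card_le_finrank_succ
    have hdim := Submodule.finrank_le (vectorSpan ℝ (Set.range z))
    omega
  have : Nonempty ι := by
    by_contra hι
    simp [not_nonempty_iff.mp hι] at hq1
  let e : κ ↪ Fin n := (Fintype.equivFin κ).toEmbedding.trans (Fin.castLEEmb hcard)
  have extend_outside : ∀ {γ : Type _} (f : κ → γ) (f₀ : Fin n → γ) (j : Fin n),
      j ∉ Set.range e → Function.extend e f f₀ j = f₀ j :=
    fun f f₀ j hj => Function.extend_apply' _ _ _ fun ⟨i, hi⟩ => hj ⟨i, hi⟩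
  refine ⟨Function.extend e w 0, Function.extend e v₀ fun _ => Classical.arbitrary ι,
    fun j => ?_, ?_, ?_⟩
  · by_cases hj : j ∈ Set.range e
    · obtain ⟨i, rfl⟩ := hj
      rw [e.injective.extend_apply]
      exact (hw0 i).le
    · rw [extend_outside _ _ _ hj]; rfl
  · rw [← hw1]
    refine (Fintype.sum_of_injective e e.injective _ _ (fun j hj => ?_) fun i => ?_).symm
    · rw [extend_outside _ _ _ hj]; rfl
    · rw [e.injective.extend_apply]
  · rw [← hwz]
    refine (Fintype.sum_of_injective e e.injective _ _ (fun j hj => ?_) fun i => ?_).symm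
    · rw [extend_outside _ _ _ hj, Pi.zero_apply, zero_smul]
    · rw [e.injective.extend_apply, e.injective.extend_apply, hv₀]

/-- Gibbs' inequality. -/
theorem sum_mul_log_sub_log_nonneg {ι : Type*} [Fintype ι] {a b : ι → ℝ} (ha : ∀ i, 0 ≤ a i)
    (hb : ∀ i, 0 ≤ b i) (hab : ∀ i, b i = 0 → a i = 0) (hsum : ∑ i, b i ≤ ∑ i, a i) :
    0 ≤ ∑ i, a i * (Real.log (a i) - Real.log (b i)) := by
  have key : ∀ i, a i - b i ≤ a i * (Real.log (a i) - Real.log (b i)) := fun i => by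
    rcases (ha i).eq_or_lt with h0 | hpos
    · simp [← h0, hb i]
    have hbpos : 0 < b i := (hb i).lt_of_ne fun h => hpos.ne' (hab i h.symm)
    have hlog := Real.log_le_sub_one_of_pos (div_pos hbpos hpos)
    rw [Real.log_div hbpos.ne' hpos.ne'] at hlog
    have hmul := mul_le_mul_of_nonneg_left hlog hpos.le
    rw [mul_sub_one, mul_div_cancel₀ _ hpos.ne'] at hmul
    linarith
  calc (0 : ℝ) ≤ ∑ i, (a i - b i) := by rw [sum_sub_distrib]; linarith
    _ ≤ _ := sum_le_sum fun i _ => key i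

section ChannelInfo

variable {S T : Type*} [Fintype S] [Fintype T]

def outputMass (n : S → ℝ) (V : S → T → ℝ) (y : T) : ℝ :=
  ∑ s, n s * V s y

/-- The mutual information of the input law `n / ∑ n` through the channel `V`, weighted by the
mass `∑ n`; unlike `mutInfo` it is homogeneous of degree one in `n`. -/
def channelInfo (n : S → ℝ) (V : S → T → ℝ) : ℝ :=
  (∑ s, n s) * mutInfo (fun p : S × T => n p.1 * V p.1 p.2 / ∑ s, n s)

theorem channelInfo_smul (c : ℝ) (n : S → ℝ) (V : S → T → ℝ) :
    channelInfo (c • n) V = c * channelInfo n V := by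
  rcases eq_or_ne c 0 with rfl | hc
  · simp [channelInfo]
  simp only [channelInfo, Pi.smul_apply, smul_eq_mul, ← mul_sum, mul_assoc,
    mul_div_mul_left _ _ hc]

theorem sum_outputMass {n : S → ℝ} {V : S → T → ℝ} (hV1 : ∀ s, ∑ y, V s y = 1) :
    ∑ y, outputMass n V y = ∑ s, n s := by
  simp only [outputMass]
  rw [sum_comm]
  simp_rw [← mul_sum, hV1, mul_one]

variable {n : S → ℝ} {V : S → T → ℝ}

theorem channelInfo_eq_sum (hn : ∀ s, 0 ≤ n s) (hV : ∀ s y, 0 ≤ V s y)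
    (hV1 : ∀ s, ∑ y, V s y = 1) :
    channelInfo n V = ∑ s, ∑ y, n s * V s y *
      (Real.log (V s y) - Real.log (outputMass n V y / ∑ s, n s)) := by
  rcases (sum_nonneg fun s _ => hn s).eq_or_lt with hN | hN
  · have hzero : ∀ s, n s = 0 := fun s =>
      (sum_eq_zero_iff_of_nonneg fun s _ => hn s).mp hN.symm s (mem_univ s)
    simp [channelInfo, hzero]
  rw [channelInfo, mutInfo, Fintype.sum_prod_type, mul_sum]
  refine sum_congr rfl fun s _ => ?_
  rw [mul_sum]
  refine sum_congr rfl fun y _ => ?_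
  have hrow : ∑ b, n s * V s b / ∑ s, n s = n s / ∑ s, n s := by
    rw [← sum_div, ← mul_sum, hV1, mul_one]
  have hcol : ∑ a, n a * V a y / ∑ s, n s = outputMass n V y / ∑ s, n s := by
    rw [← sum_div, outputMass]
  rw [hrow, hcol]
  rcases (mul_nonneg (hn s) (hV s y)).eq_or_lt with h | h
  · simp [← h]
  have hO : 0 < outputMass n V y :=
    h.trans_le (single_le_sum (f := fun t => n t * V t y)
      (fun t _ => mul_nonneg (hn t) (hV t y)) (mem_univ s))
  have hns : 0 < n s := pos_of_mul_pos_left h (hV s y)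
  have hVs : 0 < V s y := pos_of_mul_pos_right h (hn s)
  rw [show n s * V s y / (∑ s, n s) / (n s / (∑ s, n s) * (outputMass n V y / ∑ s, n s))
      = V s y / (outputMass n V y / ∑ s, n s) by field_simp,
    Real.log_div hVs.ne' (div_pos hO hN).ne']
  field_simp

theorem channelInfo_le_sum (hn : ∀ s, 0 ≤ n s) (hV : ∀ s y, 0 ≤ V s y)
    (hV1 : ∀ s, ∑ y, V s y = 1) {r : T → ℝ} (hr : ∀ y, 0 ≤ r y) (hr1 : ∑ y, r y ≤ 1)
    (hsupp : ∀ y, r y = 0 → outputMass n V y = 0) :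
    channelInfo n V ≤ ∑ s, ∑ y, n s * V s y * (Real.log (V s y) - Real.log (r y)) := by
  rw [channelInfo_eq_sum hn hV hV1]
  set N := ∑ s, n s
  rcases (sum_nonneg fun s _ => hn s).eq_or_lt with hN | hN
  · have hzero : ∀ s, n s = 0 := fun s =>
      (sum_eq_zero_iff_of_nonneg fun s _ => hn s).mp hN.symm s (mem_univ s)
    simp [hzero]
  set a : T → ℝ := fun y => outputMass n V y / N
  have hgibbs : 0 ≤ ∑ y, a y * (Real.log (a y) - Real.log (r y)) := by
    refine sum_mul_log_sub_log_nonneg (fun y => div_nonneg ?_ hN.le) hr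
      (fun y hy => by simp [a, hsupp y hy]) ?_
    · exact sum_nonneg fun s _ => mul_nonneg (hn s) (hV s y)
    · rw [← sum_div, sum_outputMass hV1, div_self hN.ne']
      exact hr1
  have hdiff : ∑ s, ∑ y, n s * V s y * (Real.log (V s y) - Real.log (r y))
      - ∑ s, ∑ y, n s * V s y * (Real.log (V s y) - Real.log (a y))
      = N * ∑ y, a y * (Real.log (a y) - Real.log (r y)) := by
    simp_rw [← sum_sub_distrib]
    rw [mul_sum, sum_comm]
    refine sum_congr rfl fun y _ => ?_
    rw [← mul_assoc, mul_div_cancel₀ _ hN.ne', outputMass, sum_mul]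
    exact sum_congr rfl fun s _ => by ring
  linarith [mul_nonneg hN.le hgibbs]

theorem channelInfo_le_sum_of_smul_le (hn : ∀ s, 0 ≤ n s) (hV : ∀ s y, 0 ≤ V s y)
    (hV1 : ∀ s, ∑ y, V s y = 1) {n' : S → ℝ} {c : ℝ} (hc : 0 < c) (hle : ∀ s, c * n s ≤ n' s) :
    channelInfo n V ≤ ∑ s, ∑ y, n s * V s y *
      (Real.log (V s y) - Real.log (outputMass n' V y / ∑ s, n' s)) := by
  have hn' : ∀ s, 0 ≤ n' s := fun s => (mul_nonneg hc.le (hn s)).trans (hle s)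
  refine channelInfo_le_sum hn hV hV1 (fun y => div_nonneg
    (sum_nonneg fun s _ => mul_nonneg (hn' s) (hV s y)) (sum_nonneg fun s _ => hn' s)) ?_
    fun y hy => ?_
  · rw [← sum_div, sum_outputMass hV1]
    exact div_self_le_one _
  have hO0 : 0 ≤ outputMass n V y := sum_nonneg fun s _ => mul_nonneg (hn s) (hV s y)
  rcases div_eq_zero_iff.mp hy with hO | hN
  · have hmono : c * outputMass n V y ≤ outputMass n' V y := by
      rw [outputMass, outputMass, mul_sum]
      exact sum_le_sum fun s _ => by
        rw [← mul_assoc]; exact mul_le_mul_of_nonneg_right (hle s) (hV s y)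
    nlinarith
  · have hmass : c * ∑ s, n s ≤ ∑ s, n' s := by
      rw [mul_sum]; exact sum_le_sum fun s _ => hle s
    have hzero : ∀ s, n s = 0 := fun s =>
      (sum_eq_zero_iff_of_nonneg fun s _ => hn s).mp
        (le_antisymm (by nlinarith) (sum_nonneg fun s _ => hn s)) s (mem_univ s)
    simp [outputMass, hzero]

/-- Concavity of mutual information in the input law, for a fixed channel. -/
theorem sum_mul_channelInfo_le {G : Type*} [Fintype G] {w : G → ℝ} (hw : ∀ g, 0 ≤ w g)
    {n : G → S → ℝ} (hn : ∀ g s, 0 ≤ n g s) (hV : ∀ s y, 0 ≤ V s y)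
    (hV1 : ∀ s, ∑ y, V s y = 1) :
    ∑ g, w g * channelInfo (n g) V ≤ channelInfo (∑ g, w g • n g) V := by
  set nbar := ∑ g, w g • n g
  have hnbar : ∀ s, nbar s = ∑ g, w g * n g s := fun s => by simp [nbar, Finset.sum_apply]
  have hnbar0 : ∀ s, 0 ≤ nbar s := fun s => by
    rw [hnbar]; exact sum_nonneg fun g _ => mul_nonneg (hw g) (hn g s)
  set r : T → ℝ := fun y => outputMass nbar V y / ∑ s, nbar s
  have hlin : ∑ s, ∑ y, nbar s * V s y * (Real.log (V s y) - Real.log (r y))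
      = ∑ g, w g * ∑ s, ∑ y, n g s * V s y * (Real.log (V s y) - Real.log (r y)) := by
    simp_rw [hnbar, sum_mul, mul_sum]
    conv_rhs => rw [sum_comm]
    refine sum_congr rfl fun s _ => ?_
    conv_rhs => rw [sum_comm]
    exact sum_congr rfl fun y _ => sum_congr rfl fun g _ => by ring
  rw [channelInfo_eq_sum hnbar0 hV hV1, hlin]
  refine sum_le_sum fun g _ => ?_
  rcases (hw g).eq_or_lt with h0 | hpos
  · simp [← h0]
  refine mul_le_mul_of_nonneg_left
    (channelInfo_le_sum_of_smul_le (hn g) hV hV1 hpos fun s => ?_) hpos.le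
  rw [hnbar]
  exact single_le_sum (f := fun g' => w g' * n g' s)
    (fun g' _ => mul_nonneg (hw g') (hn g' s)) (mem_univ g)

end ChannelInfo

def pointKernel {α β : Type*} [DecidableEq β] (g : α → β) (x : α) (b : β) : ℝ :=
  if b = g x then 1 else 0

theorem sum_pointKernel_mul {α β : Type*} [Fintype β] [DecidableEq β] (g : α → β) (x : α)
    (f : β → ℝ) : ∑ b, pointKernel g x b * f b = f (g x) := by
  simp [pointKernel]

section ProductWeight

variable {α β : Type*} [Fintype α] {τ : α → β → ℝ}

/-- The weight of the deterministic map `g` when every `x` independently draws `g x` from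
`τ x`; it exhibits a stochastic kernel as a mixture of deterministic ones. -/
def productWeight (τ : α → β → ℝ) (g : α → β) : ℝ :=
  ∏ x, τ x (g x)

theorem productWeight_nonneg (hτ : ∀ x b, 0 ≤ τ x b) (g : α → β) : 0 ≤ productWeight τ g :=
  prod_nonneg fun x _ => hτ x (g x)

variable [DecidableEq α] [Fintype β]

theorem sum_productWeight (hτ : ∀ x, ∑ b, τ x b = 1) : ∑ g, productWeight τ g = 1 := by
  simp only [productWeight, ← Fintype.prod_sum, hτ, prod_const_one]

theorem sum_productWeight_mul_apply (hτ : ∀ x, ∑ b, τ x b = 1) (x₀ : α) (f : β → ℝ) :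
    ∑ g, productWeight τ g * f (g x₀) = ∑ b, τ x₀ b * f b := by
  have hfactor : ∀ g : α → β, productWeight τ g * f (g x₀)
      = ∏ x, τ x (g x) * (if x = x₀ then f (g x) else 1) := fun g => by
    rw [prod_mul_distrib, prod_ite_eq' univ x₀, if_pos (mem_univ x₀), productWeight]
  simp_rw [hfactor]
  rw [← Fintype.prod_sum (fun x b => τ x b * if x = x₀ then f b else 1),
    prod_eq_single x₀ (fun x _ hx => by simp [hx, hτ x]) (by simp)]
  simp

theorem sum_productWeight_mul_sum (hτ : ∀ x, ∑ b, τ x b = 1) (c : α → β → ℝ) :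
    ∑ g, productWeight τ g * ∑ x, c x (g x) = ∑ x, ∑ b, τ x b * c x b := by
  simp_rw [mul_sum]
  rw [sum_comm]
  exact sum_congr rfl fun x _ => sum_productWeight_mul_apply hτ x (c x)

end ProductWeight

section Slices

omit [∀ i, Nonempty (X i)] [Nonempty Y]

variable {k : ℕ} (P : (∀ i, X i) → ℝ)

def sliceDist (d : (∀ i, X i) → Y → ℝ) (τ : (∀ i, X i) → SetsK m k → ℝ)
    (V : ∀ A : SetsK m k, (∀ i : A.1, X i.1) → Y → ℝ) : ℝ :=
  ∑ x, ∑ A, τ x A * ∑ y, P x * V A (restr A.1 x) y * d x y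

def inputWeight (τ : (∀ i, X i) → SetsK m k → ℝ) (A : SetsK m k) (s : ∀ i : A.1, X i.1) : ℝ :=
  ∑ x, (if restr A.1 x = s then P x else 0) * τ x A

def sliceInfo (τ : (∀ i, X i) → SetsK m k → ℝ)
    (V : ∀ A : SetsK m k, (∀ i : A.1, X i.1) → Y → ℝ) : ℝ :=
  ∑ A, channelInfo (inputWeight P τ A) (V A)

variable {P}

theorem inputWeight_nonneg (hP : ∀ x, 0 ≤ P x) {τ : (∀ i, X i) → SetsK m k → ℝ}
    (hτ : ∀ x A, 0 ≤ τ x A) (A : SetsK m k) (s : ∀ i : A.1, X i.1) :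
    0 ≤ inputWeight P τ A s :=
  sum_nonneg fun x _ => mul_nonneg (by split_ifs <;> simp [hP x]) (hτ x A)

theorem sum_inputWeight (τ : (∀ i, X i) → SetsK m k → ℝ) (A : SetsK m k) :
    ∑ s, inputWeight P τ A s = ∑ x, P x * τ x A := by
  simp only [inputWeight]
  rw [sum_comm]
  simp [ite_mul]

variable {U : Type} [Fintype U] (PU : U → ℝ) (σ : (∀ i, X i) → U → SetsK m k → ℝ)
  (W : ∀ A : SetsK m k, (∀ i : A.1, X i.1) → U → Y → ℝ)

omit [∀ i, DecidableEq (X i)] in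
theorem expDistMRS_eq_sum_sliceDist (d : (∀ i, X i) → Y → ℝ) :
    expDistMRS k P d PU σ W
      = ∑ u, PU u * sliceDist P d (fun x => σ x u) (fun A s => W A s u) := by
  simp only [expDistMRS, sliceDist, mul_sum]
  exact sum_congr rfl fun u _ => sum_congr rfl fun x _ => sum_congr rfl fun A _ =>
    sum_congr rfl fun y _ => by ring

theorem condMIU_eq_sum_sliceInfo :
    condMIU k P PU σ W
      = ∑ u, PU u * sliceInfo P (fun x => σ x u) (fun A s => W A s u) := by
  simp only [condMIU, sliceInfo, mul_sum]
  refine sum_congr rfl fun u _ => sum_congr rfl fun A _ => ?_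
  rw [← channelInfo_smul, channelInfo]
  have hmass : ∑ s, (PU u • inputWeight P (fun x => σ x u) A) s = prSU k P PU σ u A := by
    simp only [Pi.smul_apply, smul_eq_mul, ← mul_sum, sum_inputWeight, prSU]
  have hjoint : condQU k P PU σ W u A = fun p =>
      (PU u • inputWeight P (fun x => σ x u) A) p.1 * W A p.1 u p.2 / prSU k P PU σ u A := by
    funext p
    simp only [condQU, inputWeight, Pi.smul_apply, smul_eq_mul, mul_sum, sum_mul]
    exact congrArg (· / _) (sum_congr rfl fun x _ => by split_ifs <;> ring)
  rw [hmass, hjoint]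

variable {τ : (∀ i, X i) → SetsK m k → ℝ}

theorem sum_productWeight_mul_sliceDist (hτ : ∀ x, ∑ A, τ x A = 1) (d : (∀ i, X i) → Y → ℝ)
    (V : ∀ A : SetsK m k, (∀ i : A.1, X i.1) → Y → ℝ) :
    ∑ g, productWeight τ g * sliceDist P d (pointKernel g) V = sliceDist P d τ V := by
  simp only [sliceDist, sum_pointKernel_mul]
  exact sum_productWeight_mul_sum hτ fun x A => ∑ y, P x * V A (restr A.1 x) y * d x y

theorem inputWeight_eq_sum_productWeight (hτ : ∀ x, ∑ A, τ x A = 1) (A : SetsK m k) :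
    inputWeight P τ A = ∑ g, productWeight τ g • inputWeight P (pointKernel g) A := by
  funext s
  have hmix := sum_productWeight_mul_sum hτ
    fun x B => (if restr A.1 x = s then P x else 0) * if A = B then 1 else 0
  simp only [mul_ite, mul_one, mul_zero, sum_ite_eq, mem_univ, if_true] at hmix
  simp only [Finset.sum_apply, Pi.smul_apply, smul_eq_mul, inputWeight, pointKernel, mul_ite,
    mul_one, mul_zero, hmix]
  exact sum_congr rfl fun x _ => by split_ifs <;> ring

theorem sum_productWeight_mul_sliceInfo_le (hP : ∀ x, 0 ≤ P x) (hτ : ∀ x, IsPMF (τ x))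
    {V : ∀ A : SetsK m k, (∀ i : A.1, X i.1) → Y → ℝ} (hV : ∀ A s, IsPMF (V A s)) :
    ∑ g, productWeight τ g * sliceInfo P (pointKernel g) V ≤ sliceInfo P τ V := by
  simp only [sliceInfo, mul_sum]
  rw [sum_comm]
  refine sum_le_sum fun A _ => ?_
  rw [inputWeight_eq_sum_productWeight (fun x => (hτ x).2) A]
  exact sum_mul_channelInfo_le (productWeight_nonneg fun x => (hτ x).1)
    (fun g => inputWeight_nonneg hP (fun x B => by unfold pointKernel; split_ifs <;> simp) A)
    (fun s => (hV A s).1) fun s => (hV A s).2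

end Slices

omit [∀ i, Nonempty (X i)] [Nonempty Y] in
theorem exists_pointMass_config_le {k : ℕ} {P : (∀ i, X i) → ℝ} (hP : ∀ x, 0 ≤ P x)
    (d : (∀ i, X i) → Y → ℝ) {U : Type} [Fintype U] {PU : U → ℝ}
    {σ : (∀ i, X i) → U → SetsK m k → ℝ} {W : ∀ A : SetsK m k, (∀ i : A.1, X i.1) → U → Y → ℝ}
    (hPU : IsPMF PU) (hσ : IsSamplerU k σ) (hW : IsKernelWU k W) {n : ℕ} (hn : 2 < n) :
    ∃ (μ : Fin n → ℝ) (h : (∀ i, X i) → Fin n → SetsK m k)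
      (W' : ∀ A : SetsK m k, (∀ i : A.1, X i.1) → Fin n → Y → ℝ),
      IsPMF μ ∧ IsKernelWU k W' ∧
      expDistMRS k P d μ (fun x u A => if A = h x u then 1 else 0) W'
        = expDistMRS k P d PU σ W ∧
      condMIU k P μ (fun x u A => if A = h x u then 1 else 0) W' ≤ condMIU k P PU σ W := by
  set q : U × ((∀ i, X i) → SetsK m k) → ℝ := fun v => PU v.1 * productWeight (σ · v.1) v.2
  set F : U × ((∀ i, X i) → SetsK m k) → ℝ × ℝ := fun v =>
    (sliceDist P d (pointKernel v.2) (fun A s => W A s v.1),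
      sliceInfo P (pointKernel v.2) (fun A s => W A s v.1))
  have hq1 : ∑ v, q v = 1 := by
    simp only [q, Fintype.sum_prod_type, ← mul_sum, sum_productWeight fun x => (hσ x _).2,
      mul_one, hPU.2]
  obtain ⟨μ, v, hμ0, hμ1, hμF⟩ := exists_fin_convex_combination (by simpa using hn) F
    (fun v => mul_nonneg (hPU.1 v.1) (productWeight_nonneg (fun x => (hσ x v.1).1) v.2)) hq1
  have hmix : ∀ c : U → ((∀ i, X i) → SetsK m k) → ℝ,
      ∑ u, PU u * ∑ g, productWeight (σ · u) g * c u g = ∑ v, q v * c v.1 v.2 := fun c => by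
    simp only [q, Fintype.sum_prod_type, mul_sum, mul_assoc]
  refine ⟨μ, fun x j => (v j).2 x, fun A s j => W A s (v j).1, ⟨hμ0, hμ1⟩,
    fun A s j => hW A s (v j).1, ?_, ?_⟩
  · have hfst := congrArg Prod.fst hμF
    simp only [F, Prod.fst_sum, Prod.smul_fst, smul_eq_mul] at hfst
    rw [expDistMRS_eq_sum_sliceDist, expDistMRS_eq_sum_sliceDist]
    simp_rw [← sum_productWeight_mul_sliceDist (fun x => (hσ x _).2) d]
    exact hfst.trans (hmix fun u g => sliceDist P d (pointKernel g) fun A s => W A s u).symm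
  · have hsnd := congrArg Prod.snd hμF
    simp only [F, Prod.snd_sum, Prod.smul_snd, smul_eq_mul] at hsnd
    rw [condMIU_eq_sum_sliceInfo, condMIU_eq_sum_sliceInfo]
    calc _ = ∑ u, PU u * ∑ g, productWeight (σ · u) g *
            sliceInfo P (pointKernel g) (fun A s => W A s u) :=
          hsnd.trans (hmix fun u g => sliceInfo P (pointKernel g) fun A s => W A s u).symm
      _ ≤ _ := sum_le_sum fun u _ => mul_le_mul_of_nonneg_left
          (sum_productWeight_mul_sliceInfo_le hP (hσ · u) fun A s => hW A s u) (hPU.1 u)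

theorem stmt15_general (k : ℕ)
    (P : (∀ i, X i) → ℝ) (hP : IsPMF P)
    (d : (∀ i, X i) → Y → ℝ) (Δ : ℝ) :
    sInf {r | ∃ (PU : Fin 3 → ℝ) (σ : (∀ i, X i) → Fin 3 → SetsK m k → ℝ)
        (W : ∀ A : SetsK m k, (∀ i : A.1, X i.1) → Fin 3 → Y → ℝ),
        IsPMF PU ∧ IsSamplerU k σ ∧ IsKernelWU k W ∧
        expDistMRS k P d PU σ W ≤ Δ ∧ condMIU k P PU σ W = r} =
    sInf {r | ∃ (PU : Fin 3 → ℝ) (h : (∀ i, X i) → Fin 3 → SetsK m k)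
        (W : ∀ A : SetsK m k, (∀ i : A.1, X i.1) → Fin 3 → Y → ℝ),
        IsPMF PU ∧ IsKernelWU k W ∧
        expDistMRS k P d PU (fun x u A => if A = h x u then 1 else 0) W ≤ Δ ∧
        condMIU k P PU (fun x u A => if A = h x u then 1 else 0) W = r} := by
  refine (Real.sInf_eq_of_subset_of_forall_exists_le ?_ ?_).symm
  · rintro _ ⟨PU, h, W, hPU, hW, hΔ, rfl⟩
    exact ⟨PU, _, W, hPU, fun x u => ⟨fun A => by split_ifs <;> simp, by simp⟩, hW, hΔ, rfl⟩
  · rintro _ ⟨PU, σ, W, hPU, hσ, hW, hΔ, rfl⟩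
    obtain ⟨μ, h, W', hμ, hW', hdist, hinfo⟩ :=
      exists_pointMass_config_le hP.1 d hPU hσ hW (by norm_num : 2 < 3)
    exact ⟨_, ⟨μ, h, W', hμ, hW', hdist.trans_le hΔ, rfl⟩, hinfo⟩

/-- with `𝒰 = {1,2,3}` and `Δ_min ≤ Δ ≤ Δ_max`, the minimum of
`I(X_S ∧ Y | S, U)` over triples `(P_U, σ, W)` with `E[d(X,Y)] ≤ Δ` equals the minimum
over such triples whose sampler is a conditional point-mass `σ(A|x,u) = 1(A = h(x,u))`. -/
theorem stmt15 (k : ℕ) (hk1 : 1 ≤ k) (hkm : k ≤ m)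
    (P : (∀ i, X i) → ℝ) (hP : IsPMF P) (hfull : ∀ x, 0 < P x)
    (d : (∀ i, X i) → Y → ℝ) (hd : ∀ x y, 0 ≤ d x y) (Δ : ℝ)
    (hmin : sInf {r | ∃ σ : (∀ i, X i) → SetsK m k → ℝ, (∀ x, IsPMF (σ x)) ∧
        (∑ A : SetsK m k, ∑ xA : ∀ i : A.1, X i.1,
          Finset.univ.inf' Finset.univ_nonempty
            (fun y => ∑ x, if restr A.1 x = xA then P x * σ x A * d x y else 0)) = r} ≤ Δ)
    (hmax : Δ ≤ sInf {r | ∃ σ : (∀ i, X i) → SetsK m k → ℝ, (∀ x, IsPMF (σ x)) ∧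
        (∑ A : SetsK m k,
          Finset.univ.inf' Finset.univ_nonempty
            (fun y => ∑ x, P x * σ x A * d x y)) = r}) :
    sInf {r | ∃ (PU : Fin 3 → ℝ) (σ : (∀ i, X i) → Fin 3 → SetsK m k → ℝ)
        (W : ∀ A : SetsK m k, (∀ i : A.1, X i.1) → Fin 3 → Y → ℝ),
        IsPMF PU ∧ IsSamplerU k σ ∧ IsKernelWU k W ∧
        expDistMRS k P d PU σ W ≤ Δ ∧ condMIU k P PU σ W = r} =
    sInf {r | ∃ (PU : Fin 3 → ℝ) (h : (∀ i, X i) → Fin 3 → SetsK m k)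
        (W : ∀ A : SetsK m k, (∀ i : A.1, X i.1) → Fin 3 → Y → ℝ),
        IsPMF PU ∧ IsKernelWU k W ∧
        expDistMRS k P d PU (fun x u A => if A = h x u then 1 else 0) W ≤ Δ ∧
        condMIU k P PU (fun x u A => if A = h x u then 1 else 0) W = r} :=
  stmt15_general k P hP d Δ
end
end

section
/- The minimum over sampler kernels σ (assigning to each x ∈ 𝒳_ℳ a pmf σ(·|x) on 𝒜_k) of the quantity Δ(σ) := Σ_{A ∈ 𝒜_k} Σ_{x_A-values} min_{y ∈ 𝒴} Σ_{x : x restricted to A equals x_A} P(x) σ(A|x) d(x, y) is attained by a conditional point-mass sampler: min over all σ of Δ(σ) equals min over maps h : 𝒳_ℳ → 𝒜_k of Δ(δ_h), where δ_h(A|x) = 1(A = h(x)). -/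
noncomputable section

variable {m : ℕ} {X : Fin m → Type} [∀ i, Fintype (X i)] [∀ i, DecidableEq (X i)]
  [∀ i, Nonempty (X i)] {Y : Type} [Fintype Y] [Nonempty Y]

/-- `Δ(σ)`: the minimum achievable expected distortion when sampling with `σ`,
`Σ_{A ∈ 𝒜_k} Σ_{x_A} min_y Σ_{x : x|_A = x_A} P(x) σ(A|x) d(x,y)`. -/
def DeltaOf (k : ℕ) (P : (∀ i, X i) → ℝ) (d : (∀ i, X i) → Y → ℝ)
    (σ : (∀ i, X i) → SetsK m k → ℝ) : ℝ :=
  ∑ A : SetsK m k, ∑ xA : ∀ i : A.1, X i.1,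
    Finset.univ.inf' Finset.univ_nonempty
      (fun y => ∑ x, if restr A.1 x = xA then P x * σ x A * d x y else 0)

/-! Δ(σ) is a sum of minima of functions that are linear in σ, hence concave in σ. Every
kernel σ is the convex combination of the deterministic kernels δ_h with weights
∏ₓ σ(h x | x), the law of a choice function h drawn independently at each x; by the minimum
principle for concave functions, some δ_h then does at least as well as σ. -/

section Concavity

variable {𝕜 E ι β : Type*} [Semiring 𝕜] [PartialOrder 𝕜] [AddCommMonoid E] [SMul 𝕜 E]
  {s : Set E}

theorem ConcaveOn.finset_sum [AddCommMonoid β] [PartialOrder β] [IsOrderedAddMonoid β]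
    [Module 𝕜 β] [PosSMulMono 𝕜 β] {t : Finset ι} {f : ι → E → β} (hs : Convex 𝕜 s)
    (hf : ∀ i ∈ t, ConcaveOn 𝕜 s (f i)) : ConcaveOn 𝕜 s (fun x => ∑ i ∈ t, f i x) := by
  simpa only [← Finset.sum_apply] using
    Finset.sum_induction f (ConcaveOn 𝕜 s) (fun _ _ => ConcaveOn.add) (concaveOn_const 0 hs) hf

theorem ConcaveOn.finset_inf' [AddCommMonoid β] [LinearOrder β] [IsOrderedAddMonoid β]
    [Module 𝕜 β] [PosSMulStrictMono 𝕜 β] {t : Finset ι} (ht : t.Nonempty) {f : ι → E → β}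
    (hf : ∀ i ∈ t, ConcaveOn 𝕜 s (f i)) : ConcaveOn 𝕜 s (fun x => t.inf' ht (f · x)) := by
  simpa only [← Finset.inf'_apply] using
    Finset.inf'_induction ht f (fun _ h₁ _ h₂ => ConcaveOn.inf h₁ h₂) hf

end Concavity

section DeterministicKernels

variable {α β : Type*} [Fintype α] [DecidableEq α] [Fintype β] [DecidableEq β]

theorem isPMF_ite_eq (b₀ : β) : IsPMF (fun b => if b = b₀ then (1 : ℝ) else 0) :=
  ⟨fun b => by positivity, by simp⟩

theorem sum_prod_mul_ite_eq (σ : α → β → ℝ) (hσ : ∀ a, ∑ b, σ a b = 1) (a : α) (b : β) :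
    ∑ h : α → β, (∏ a', σ a' (h a')) * (if b = h a then 1 else 0) = σ a b := by
  -- `τ` is `σ` with its row at `a` cut down to the entry `b`; expanding `∏ a', ∑ b', τ a' b'`
  -- then sums the weights of exactly those `h` with `h a = b`.
  set τ : α → β → ℝ := fun a' b' => if a' = a then (if b' = b then σ a' b' else 0) else σ a' b'
  have hτ : ∀ h : α → β, ∏ a', τ a' (h a') = (∏ a', σ a' (h a')) * (if b = h a then 1 else 0) := by
    intro h
    by_cases hb : b = h a
    · rw [if_pos hb, mul_one]
      refine Finset.prod_congr rfl fun a' _ => ?_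
      by_cases ha' : a' = a
      · subst ha'; simp [τ, hb]
      · simp [τ, ha']
    · rw [if_neg hb, mul_zero]
      exact Finset.prod_eq_zero (Finset.mem_univ a) (by simp [τ, Ne.symm hb])
  have hτsum : ∀ a', ∑ b', τ a' b' = if a' = a then σ a b else 1 := by
    intro a'
    by_cases ha' : a' = a
    · subst ha'; simp [τ]
    · simp [τ, ha', hσ]
  simp_rw [← hτ, ← Fintype.prod_sum, hτsum, Fintype.prod_ite_eq']

theorem mem_convexHull_range_ite_eq (σ : α → β → ℝ) (hσ : ∀ a, IsPMF (σ a)) :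
    σ ∈ convexHull ℝ (Set.range fun (h : α → β) a b => if b = h a then (1 : ℝ) else 0) := by
  have hw : ∑ h : α → β, ∏ a, σ a (h a) = 1 := by
    simp [← Fintype.prod_sum, (hσ _).2]
  have hσ_eq : σ = ∑ h : α → β, (∏ a, σ a (h a)) • fun a b => if b = h a then (1 : ℝ) else 0 := by
    ext a b
    simp only [Finset.sum_apply, Pi.smul_apply, smul_eq_mul]
    exact (sum_prod_mul_ite_eq σ (fun a => (hσ a).2) a b).symm
  rw [hσ_eq]
  exact (convex_convexHull ℝ _).sum_mem (fun h _ => Finset.prod_nonneg fun a _ => (hσ a).1 _)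
    hw fun h _ => subset_convexHull ℝ _ ⟨h, rfl⟩

end DeterministicKernels

omit [∀ i, Nonempty (X i)] in
theorem concaveOn_DeltaOf (k : ℕ) (P : (∀ i, X i) → ℝ) (d : (∀ i, X i) → Y → ℝ) :
    ConcaveOn ℝ Set.univ (DeltaOf k P d) := by
  refine ConcaveOn.finset_sum convex_univ fun A _ => ConcaveOn.finset_sum convex_univ
    fun xA _ => ConcaveOn.finset_inf' _ fun y _ => ConcaveOn.finset_sum convex_univ fun x _ => ?_
  split_ifs
  · exact ((P x * d x y) • (LinearMap.proj (R := ℝ) (φ := fun _ => ℝ) A ∘ₗ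
      LinearMap.proj (φ := fun _ => SetsK m k → ℝ) x)).concaveOn convex_univ
      |>.congr fun σ _ => by simp; ring
  · exact concaveOn_const 0 convex_univ

theorem stmt16_general (k : ℕ) (P : (∀ i, X i) → ℝ) (d : (∀ i, X i) → Y → ℝ) :
    sInf {r | ∃ σ : (∀ i, X i) → SetsK m k → ℝ,
        (∀ x, IsPMF (σ x)) ∧ DeltaOf k P d σ = r} =
    sInf {r | ∃ h : (∀ i, X i) → SetsK m k,
        DeltaOf k P d (fun x A => if A = h x then 1 else 0) = r} := by
  apply csInf_eq_csInf_of_forall_exists_le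
  · rintro _ ⟨σ, hσ, rfl⟩
    obtain ⟨_, ⟨h, rfl⟩, hle⟩ := (concaveOn_DeltaOf k P d).exists_le_of_mem_convexHull
      (Set.subset_univ _) (mem_convexHull_range_ite_eq σ hσ)
    exact ⟨_, ⟨h, rfl⟩, hle⟩
  · rintro _ ⟨h, rfl⟩
    exact ⟨_, ⟨_, fun x => isPMF_ite_eq (h x), rfl⟩, le_rfl⟩

/-- the minimum of `Δ(σ)` over sampler kernels is attained by a
conditional point-mass sampler: the minimum over all `σ` equals the minimum over
point-mass samplers `δ_h`. -/
theorem stmt16 (k : ℕ) (hk1 : 1 ≤ k) (hkm : k ≤ m)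
    (P : (∀ i, X i) → ℝ) (hP : IsPMF P) (hfull : ∀ x, 0 < P x)
    (d : (∀ i, X i) → Y → ℝ) (hd : ∀ x y, 0 ≤ d x y) :
    sInf {r | ∃ σ : (∀ i, X i) → SetsK m k → ℝ,
        (∀ x, IsPMF (σ x)) ∧ DeltaOf k P d σ = r} =
    sInf {r | ∃ h : (∀ i, X i) → SetsK m k,
        DeltaOf k P d (fun x A => if A = h x then 1 else 0) = r} :=
  stmt16_general k P d
end
end

section
/- For every λ ≥ 0, the minimum over pairs (σ, W) of a sampler kernel σ and a reconstruction kernel W of I((S, X_S) ∧ Y) + λ E[d(X, Y)] equals the minimum of the same objective restricted to pairs in which σ is a conditional point-mass sampler σ(A|x) = 1(A = h(x)) for some map h : 𝒳_ℳ → 𝒜_k. -/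
/-! For a fixed reconstruction kernel `W`, the objective is concave in the sampler `σ`: the
mutual information across a fixed channel is concave in the input pmf (a linear term plus the
output entropy), the pmf of `(S, X_S)` is linear in `σ`, and so is the expected distortion.
Sampler kernels form a product of simplices, which is the convex hull of the point-mass samplers,
and a concave function on a convex hull is bounded below by its value at one of the generating
points. Hence every value of the objective is dominated by a value attained with a point-mass
sampler, which makes the two infima equal whether or not the sets are bounded below. -/

noncomputable section

variable {m : ℕ} {X : Fin m → Type} [∀ i, Fintype (X i)] [∀ i, DecidableEq (X i)]
  [∀ i, Nonempty (X i)] {Y : Type} [Fintype Y] [Nonempty Y]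

/-- The joint pmf of `((S, X_S), Y)`:
`Q((A, x_A), y) = (Σ_{x : x|_A = x_A} P(x) σ(A|x)) · W(y|A, x_A)`. -/
def QSXY (k : ℕ) (P : (∀ i, X i) → ℝ) (σ : (∀ i, X i) → SetsK m k → ℝ)
    (W : ∀ A : SetsK m k, (∀ i : A.1, X i.1) → Y → ℝ) :
    (Σ A : SetsK m k, ∀ i : A.1, X i.1) × Y → ℝ := fun p =>
  (∑ x, if restr p.1.1.1 x = p.1.2 then P x * σ x p.1.1 else 0) * W p.1.1 p.1.2 p.2

/-- The expected distortion `E[d(X,Y)]` under the joint pmf `P(x) σ(A|x) W(y|A,x_A)`. -/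
def expDistMRSU (k : ℕ) (P : (∀ i, X i) → ℝ) (d : (∀ i, X i) → Y → ℝ)
    (σ : (∀ i, X i) → SetsK m k → ℝ)
    (W : ∀ A : SetsK m k, (∀ i : A.1, X i.1) → Y → ℝ) : ℝ :=
  ∑ x : ∀ i, X i, ∑ A : SetsK m k, ∑ y, P x * σ x A * W A (restr A.1 x) y * d x y

open Finset Real

theorem ConcaveOn.sum {E ι : Type*} [AddCommMonoid E] [Module ℝ E] {s : Set E} (hs : Convex ℝ s)
    (t : Finset ι) {f : ι → E → ℝ} (hf : ∀ i ∈ t, ConcaveOn ℝ s (f i)) :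
    ConcaveOn ℝ s fun x => ∑ i ∈ t, f i x := by
  classical
  induction t using Finset.induction_on with
  | empty => simpa using concaveOn_const (0 : ℝ) hs
  | insert i t hi ih =>
    simp only [Finset.sum_insert hi]
    exact (hf i (mem_insert_self i t)).add (ih fun j hj => hf j (mem_insert_of_mem hj))

section Channel

variable {α β : Type*} [Fintype α] [Fintype β]

theorem mutInfo_channel_eq {μ : α → ℝ} (hμ : 0 ≤ μ) {W : α → β → ℝ} (hW : ∀ a, IsPMF (W a)) :
    mutInfo (fun p : α × β => μ p.1 * W p.1 p.2) =
      ∑ a, μ a * ∑ b, W a b * log (W a b) + ∑ b, negMulLog (∑ a, μ a * W a b) := by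
  have hrow : ∀ a, ∑ b, μ a * W a b = μ a := fun a => by rw [← mul_sum, (hW a).2, mul_one]
  have hterm : ∀ a b, μ a * W a b * log (μ a * W a b / (μ a * ∑ a', μ a' * W a' b)) =
      μ a * (W a b * log (W a b)) - μ a * W a b * log (∑ a', μ a' * W a' b) := by
    intro a b
    rcases (mul_nonneg (hμ a) ((hW a).1 b)).eq_or_lt with h0 | hpos
    · rcases mul_eq_zero.1 h0.symm with h | h <;> simp [h]
    · have hμa : 0 < μ a := pos_of_mul_pos_left hpos ((hW a).1 b)
      have hWab : 0 < W a b := pos_of_mul_pos_right hpos (hμ a)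
      have hν : 0 < ∑ a', μ a' * W a' b := hpos.trans_le <|
        single_le_sum (fun a' _ => mul_nonneg (hμ a') ((hW a').1 b)) (mem_univ a)
      rw [mul_div_mul_left _ _ hμa.ne', log_div hWab.ne' hν.ne']
      ring
  unfold mutInfo
  simp only [Fintype.sum_prod_type, hrow, hterm, sum_sub_distrib, ← mul_sum]
  rw [sum_comm (f := fun a b => μ a * W a b * log (∑ a', μ a' * W a' b))]
  simp only [← sum_mul, negMulLog, neg_mul, sum_neg_distrib, sub_eq_add_neg]

theorem concaveOn_mutInfo_channel {W : α → β → ℝ} (hW : ∀ a, IsPMF (W a)) :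
    ConcaveOn ℝ (Set.Ici 0) fun μ : α → ℝ => mutInfo fun p : α × β => μ p.1 * W p.1 p.2 := by
  have hlin := (Fintype.linearCombination ℝ fun a => ∑ b, W a b * log (W a b)).concaveOn
    (convex_Ici (0 : α → ℝ))
  have hout : ∀ b, ConcaveOn ℝ (Set.Ici 0)
      fun μ : α → ℝ => negMulLog (Fintype.linearCombination ℝ (W · b) μ) := fun b =>
    (concaveOn_negMulLog.comp_linearMap _).subset
      (fun μ hμ => sum_nonneg fun a _ => mul_nonneg (hμ a) ((hW a).1 b)) (convex_Ici 0)
  refine (hlin.add (ConcaveOn.sum (convex_Ici 0) univ fun b _ => hout b)).congr fun μ hμ => ?_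
  simp [mutInfo_channel_eq hμ hW, Fintype.linearCombination_apply]

theorem isPMF_pointMass [DecidableEq β] (b₀ : β) : IsPMF fun b => if b = b₀ then (1 : ℝ) else 0 :=
  ⟨fun _ => ite_nonneg zero_le_one le_rfl, by simp⟩

theorem mem_convexHull_pointMass [DecidableEq β] {σ : α → β → ℝ} (hσ : ∀ a, IsPMF (σ a)) :
    σ ∈ convexHull ℝ (Set.range fun (h : α → β) a b => if b = h a then (1 : ℝ) else 0) := by
  have hσ' : σ ∈ Set.univ.pi fun _ =>
      convexHull ℝ (Set.range fun (i : β) j => if i = j then (1 : ℝ) else 0) := by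
    rw [convexHull_basis_eq_stdSimplex]
    exact fun a _ => hσ a
  rw [← convexHull_pi] at hσ'
  refine convexHull_mono (fun τ hτ => ?_) hσ'
  choose h hh using fun a => hτ a (Set.mem_univ a)
  refine ⟨h, funext fun a => funext fun b => ?_⟩
  simp [← hh a, eq_comm]

end Channel

/-- `QSXY k P σ W` is definitionally `fun p => sampledMarginal k P σ p.1 * W p.1.1 p.1.2 p.2`. -/
def sampledMarginal (k : ℕ) (P : (∀ i, X i) → ℝ) :
    ((∀ i, X i) → SetsK m k → ℝ) →ₗ[ℝ] ((Σ A : SetsK m k, ∀ i : A.1, X i.1) → ℝ) where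
  toFun σ s := ∑ x, if restr s.1.1 x = s.2 then P x * σ x s.1 else 0
  map_add' σ τ := by
    ext s
    simp only [Pi.add_apply, mul_add, ← sum_add_distrib]
    exact sum_congr rfl fun x _ => by split_ifs <;> simp
  map_smul' c σ := by
    ext s
    simp only [Pi.smul_apply, smul_eq_mul, RingHom.id_apply, mul_sum]
    exact sum_congr rfl fun x _ => by split_ifs <;> ring

def expDistLinear (k : ℕ) (P : (∀ i, X i) → ℝ) (d : (∀ i, X i) → Y → ℝ)
    (W : ∀ A : SetsK m k, (∀ i : A.1, X i.1) → Y → ℝ) :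
    ((∀ i, X i) → SetsK m k → ℝ) →ₗ[ℝ] ℝ where
  toFun σ := expDistMRSU k P d σ W
  map_add' σ τ := by simp only [expDistMRSU, Pi.add_apply, mul_add, add_mul, sum_add_distrib]
  map_smul' c σ := by
    simp only [expDistMRSU, Pi.smul_apply, smul_eq_mul, RingHom.id_apply, mul_sum]
    exact sum_congr rfl fun x _ => sum_congr rfl fun A _ => sum_congr rfl fun y _ => by ring

omit [∀ i, Nonempty (X i)] [Nonempty Y] in
theorem concaveOn_objective (k : ℕ) {P : (∀ i, X i) → ℝ} (hP : ∀ x, 0 ≤ P x)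
    (d : (∀ i, X i) → Y → ℝ) (lam : ℝ)
    {W : ∀ A : SetsK m k, (∀ i : A.1, X i.1) → Y → ℝ} (hW : ∀ A xA, IsPMF (W A xA)) :
    ConcaveOn ℝ (Set.Ici 0) fun σ : (∀ i, X i) → SetsK m k → ℝ =>
      mutInfo (QSXY k P σ W) + lam * expDistMRSU k P d σ W := by
  have hinfo := (concaveOn_mutInfo_channel (W := fun s : Σ A : SetsK m k, _ => W s.1 s.2)
    fun s => hW s.1 s.2).comp_linearMap (sampledMarginal k P)
  refine (hinfo.subset (fun σ hσ s => sum_nonneg fun x _ => ?_) (convex_Ici 0)).add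
    ((lam • expDistLinear k P d W).concaveOn (convex_Ici 0))
  split_ifs
  exacts [mul_nonneg (hP x) (hσ x s.1), le_rfl]

theorem stmt17_general (k : ℕ)
    (P : (∀ i, X i) → ℝ) (hP : IsPMF P)
    (d : (∀ i, X i) → Y → ℝ) (lam : ℝ) :
    sInf {r | ∃ (σ : (∀ i, X i) → SetsK m k → ℝ)
        (W : ∀ A : SetsK m k, (∀ i : A.1, X i.1) → Y → ℝ),
        (∀ x, IsPMF (σ x)) ∧ (∀ A xA, IsPMF (W A xA)) ∧
        mutInfo (QSXY k P σ W) + lam * expDistMRSU k P d σ W = r} =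
    sInf {r | ∃ (h : (∀ i, X i) → SetsK m k)
        (W : ∀ A : SetsK m k, (∀ i : A.1, X i.1) → Y → ℝ),
        (∀ A xA, IsPMF (W A xA)) ∧
        mutInfo (QSXY k P (fun x A => if A = h x then 1 else 0) W) +
          lam * expDistMRSU k P d (fun x A => if A = h x then 1 else 0) W = r} := by
  apply csInf_eq_csInf_of_forall_exists_le
  · rintro r ⟨σ, W, hσ, hW, rfl⟩
    obtain ⟨_, ⟨h, rfl⟩, hle⟩ := (concaveOn_objective k hP.1 d lam hW).exists_le_of_mem_convexHull
      (by rintro _ ⟨h, rfl⟩ x; exact (isPMF_pointMass (h x)).1) (mem_convexHull_pointMass hσ)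
    exact ⟨_, ⟨h, W, hW, rfl⟩, hle⟩
  · rintro r ⟨h, W, hW, rfl⟩
    exact ⟨_, ⟨_, W, fun x => isPMF_pointMass (h x), hW, rfl⟩, le_rfl⟩

/-- for every `λ ≥ 0`, the Lagrangian minimum of
`I((S,X_S) ∧ Y) + λ E[d(X,Y)]` over pairs `(σ, W)` equals the minimum over pairs
whose sampler is a conditional point-mass `σ(A|x) = 1(A = h(x))`. -/
theorem stmt17 (k : ℕ) (hk1 : 1 ≤ k) (hkm : k ≤ m)
    (P : (∀ i, X i) → ℝ) (hP : IsPMF P) (hfull : ∀ x, 0 < P x)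
    (d : (∀ i, X i) → Y → ℝ) (hd : ∀ x y, 0 ≤ d x y) (lam : ℝ) (hlam : 0 ≤ lam) :
    sInf {r | ∃ (σ : (∀ i, X i) → SetsK m k → ℝ)
        (W : ∀ A : SetsK m k, (∀ i : A.1, X i.1) → Y → ℝ),
        (∀ x, IsPMF (σ x)) ∧ (∀ A xA, IsPMF (W A xA)) ∧
        mutInfo (QSXY k P σ W) + lam * expDistMRSU k P d σ W = r} =
    sInf {r | ∃ (h : (∀ i, X i) → SetsK m k)
        (W : ∀ A : SetsK m k, (∀ i : A.1, X i.1) → Y → ℝ),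
        (∀ A xA, IsPMF (W A xA)) ∧
        mutInfo (QSXY k P (fun x A => if A = h x then 1 else 0) W) +
          lam * expDistMRSU k P d (fun x A => if A = h x then 1 else 0) W = r} :=
  stmt17_general k P hP d lam
end
end

section
/- For every Δ, the infimum, over all finite nonempty sets 𝒰 and all triples (P_U, σ, W) of a pmf P_U on 𝒰, a sampler kernel σ on 𝒳_ℳ × 𝒰, and a reconstruction kernel W, satisfying E[d(X, Y)] ≤ Δ, of I(X_S ∧ Y | S, U), equals the minimum of the same quantity restricted to the fixed three-element set 𝒰 = {1, 2, 3}; that is, a time-sharing variable U with at most three values suffices. -/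
noncomputable section

variable {m : ℕ} {X : Fin m → Type} [∀ i, Fintype (X i)] [∀ i, DecidableEq (X i)]
  [∀ i, Nonempty (X i)] {Y : Type} [Fintype Y] [Nonempty Y]

section TimeSharing

variable (U : Type)

/-- `Pr(U = u, S = A)` under the joint pmf `P_U(u) P(x) σ(A|x,u) W(y|A,x_A,u)`. -/
def prSU' (iU : Fintype U) (k : ℕ) (P : (∀ i, X i) → ℝ) (PU : U → ℝ)
    (σ : (∀ i, X i) → U → SetsK m k → ℝ) (u : U) (A : SetsK m k) : ℝ :=
  PU u * ∑ x, P x * σ x u A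

/-- The conditional joint pmf of `(X_A, Y)` given `S = A, U = u`. -/
def condQU' (iU : Fintype U) (k : ℕ) (P : (∀ i, X i) → ℝ) (PU : U → ℝ)
    (σ : (∀ i, X i) → U → SetsK m k → ℝ)
    (W : ∀ A : SetsK m k, (∀ i : A.1, X i.1) → U → Y → ℝ)
    (u : U) (A : SetsK m k) : (∀ i : A.1, X i.1) × Y → ℝ := fun p =>
  (∑ x, if restr A.1 x = p.1 then PU u * P x * σ x u A * W A p.1 u p.2 else 0) /
    prSU' U iU k P PU σ u A

/-- `I(X_S ∧ Y | S, U) = Σ_{u,A} Pr(U = u, S = A) I_{u,A}` (the `U`-marginal pmf and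
the sum over `u` use the finiteness witness `iU`). -/
def condMIU' (iU : Fintype U) (k : ℕ) (P : (∀ i, X i) → ℝ) (PU : U → ℝ)
    (σ : (∀ i, X i) → U → SetsK m k → ℝ)
    (W : ∀ A : SetsK m k, (∀ i : A.1, X i.1) → U → Y → ℝ) : ℝ :=
  letI := iU
  ∑ u : U, ∑ A : SetsK m k,
    prSU' U iU k P PU σ u A * mutInfo (condQU' U iU k P PU σ W u A)

/-- The expected distortion `E[d(X,Y)]` under `P_U(u) P(x) σ(A|x,u) W(y|A,x_A,u)`. -/
def expDistMRS' (iU : Fintype U) (k : ℕ) (P : (∀ i, X i) → ℝ)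
    (d : (∀ i, X i) → Y → ℝ) (PU : U → ℝ)
    (σ : (∀ i, X i) → U → SetsK m k → ℝ)
    (W : ∀ A : SetsK m k, (∀ i : A.1, X i.1) → U → Y → ℝ) : ℝ :=
  letI := iU
  ∑ u : U, ∑ x : ∀ i, X i, ∑ A : SetsK m k, ∑ y,
    PU u * P x * σ x u A * W A (restr A.1 x) u y * d x y

/-- A pmf on `U`, via the finiteness witness `iU`. -/
def IsPMF' (iU : Fintype U) (p : U → ℝ) : Prop :=
  letI := iU
  (∀ t, 0 ≤ p t) ∧ ∑ t, p t = 1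

end TimeSharing

section AuxStuff

variable {m : ℕ} {X : Fin m → Type} [∀ i, Fintype (X i)] [∀ i, DecidableEq (X i)]
  [∀ i, Nonempty (X i)] {Y : Type} [Fintype Y] [Nonempty Y]

/-- `Pr(S = A)` for a fixed value of `U` (with the `P_U` factor removed). -/
def sAaux (k : ℕ) (P : (∀ i, X i) → ℝ) (σ₀ : (∀ i, X i) → SetsK m k → ℝ)
    (A : SetsK m k) : ℝ :=
  ∑ x, P x * σ₀ x A

/-- The conditional joint pmf of `(X_A, Y)` given `S = A` for a fixed value of `U`. -/
def QAaux (k : ℕ) (P : (∀ i, X i) → ℝ) (σ₀ : (∀ i, X i) → SetsK m k → ℝ)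
    (W₀ : ∀ A : SetsK m k, (∀ i : A.1, X i.1) → Y → ℝ) (A : SetsK m k) :
    (∀ i : A.1, X i.1) × Y → ℝ := fun p =>
  (∑ x, if restr A.1 x = p.1 then P x * σ₀ x A * W₀ A p.1 p.2 else 0) / sAaux k P σ₀ A

/-- `I(X_S ∧ Y | S)` for a fixed value of `U`. -/
def PhiAux (k : ℕ) (P : (∀ i, X i) → ℝ) (σ₀ : (∀ i, X i) → SetsK m k → ℝ)
    (W₀ : ∀ A : SetsK m k, (∀ i : A.1, X i.1) → Y → ℝ) : ℝ :=
  ∑ A : SetsK m k, sAaux k P σ₀ A * mutInfo (QAaux k P σ₀ W₀ A)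

/-- `E[d(X,Y)]` for a fixed value of `U`. -/
def GAux (k : ℕ) (P : (∀ i, X i) → ℝ) (d : (∀ i, X i) → Y → ℝ)
    (σ₀ : (∀ i, X i) → SetsK m k → ℝ)
    (W₀ : ∀ A : SetsK m k, (∀ i : A.1, X i.1) → Y → ℝ) : ℝ :=
  ∑ x : ∀ i, X i, ∑ A : SetsK m k, ∑ y, P x * σ₀ x A * W₀ A (restr A.1 x) y * d x y

lemma condMIU'_eq (U : Type) (iU : Fintype U) (k : ℕ) (P : (∀ i, X i) → ℝ) (PU : U → ℝ)
    (σ : (∀ i, X i) → U → SetsK m k → ℝ)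
    (W : ∀ A : SetsK m k, (∀ i : A.1, X i.1) → U → Y → ℝ) :
    condMIU' U iU k P PU σ W =
      letI := iU
      ∑ u : U, PU u * PhiAux k P (fun x A => σ x u A) (fun A xA y => W A xA u y) := by
  letI := iU
  show (∑ u : U, ∑ A : SetsK m k,
      prSU' U iU k P PU σ u A * mutInfo (condQU' U iU k P PU σ W u A)) = _
  refine Finset.sum_congr rfl fun u _ => ?_
  rw [PhiAux, Finset.mul_sum]
  refine Finset.sum_congr rfl fun A _ => ?_
  by_cases h : PU u = 0
  · simp [prSU', h]
  · have h1 : prSU' U iU k P PU σ u A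
        = PU u * sAaux k P (fun x A => σ x u A) A := rfl
    have h2 : condQU' U iU k P PU σ W u A
        = QAaux k P (fun x A => σ x u A) (fun A xA y => W A xA u y) A := by
      funext p
      show (∑ x, if restr A.1 x = p.1 then PU u * P x * σ x u A * W A p.1 u p.2 else 0) /
          prSU' U iU k P PU σ u A = _
      have hnum : (∑ x, if restr A.1 x = p.1
            then PU u * P x * σ x u A * W A p.1 u p.2 else 0)
          = PU u * ∑ x, if restr A.1 x = p.1
            then P x * σ x u A * W A p.1 u p.2 else 0 := by
        rw [Finset.mul_sum]
        refine Finset.sum_congr rfl fun x _ => ?_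
        split_ifs
        · ring
        · simp
      rw [h1, hnum, mul_div_mul_left _ _ h]
      rfl
    rw [h1, h2, mul_assoc]

lemma expDistMRS'_eq (U : Type) (iU : Fintype U) (k : ℕ) (P : (∀ i, X i) → ℝ)
    (d : (∀ i, X i) → Y → ℝ) (PU : U → ℝ)
    (σ : (∀ i, X i) → U → SetsK m k → ℝ)
    (W : ∀ A : SetsK m k, (∀ i : A.1, X i.1) → U → Y → ℝ) :
    expDistMRS' U iU k P d PU σ W =
      letI := iU
      ∑ u : U, PU u * GAux k P d (fun x A => σ x u A) (fun A xA y => W A xA u y) := by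
  letI := iU
  show (∑ u : U, ∑ x : ∀ i, X i, ∑ A : SetsK m k, ∑ y,
      PU u * P x * σ x u A * W A (restr A.1 x) u y * d x y) = _
  refine Finset.sum_congr rfl fun u _ => ?_
  rw [GAux, Finset.mul_sum]
  refine Finset.sum_congr rfl fun x _ => ?_
  rw [Finset.mul_sum]
  refine Finset.sum_congr rfl fun A _ => ?_
  rw [Finset.mul_sum]
  refine Finset.sum_congr rfl fun y _ => ?_
  ring

lemma extend_sum {ι κ : Type*} [Fintype ι] [Fintype κ] [DecidableEq κ]
    {M : Type*} [AddCommMonoid M]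
    (e : ι ↪ κ) [∀ j : κ, Decidable (∃ i, e i = j)] (F : ι → M) :
    ∑ j : κ, (if h : ∃ i, e i = j then F h.choose else 0) = ∑ i : ι, F i := by
  have key : ∀ i : ι, (if h : ∃ i', e i' = e i then F h.choose else 0) = F i := by
    intro i
    rw [dif_pos ⟨i, rfl⟩]
    exact congrArg F (e.injective (⟨i, rfl⟩ : ∃ i', e i' = e i).choose_spec)
  have h2 : ∑ i : ι, F i
      = ∑ j ∈ Finset.univ.image (fun i => e i),
          (if h : ∃ i, e i = j then F h.choose else 0) := by
    rw [Finset.sum_image (fun i _ j _ h => e.injective h)]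
    exact (Finset.sum_congr rfl fun i _ => key i).symm
  rw [h2]
  refine (Finset.sum_subset (Finset.subset_univ _) fun j _ hj => ?_).symm
  rw [dif_neg]
  rintro ⟨i, rfl⟩
  exact hj (Finset.mem_image.2 ⟨i, Finset.mem_univ _, rfl⟩)

end AuxStuff

/-- a time-sharing variable with at most three values suffices: the
infimum of `I(X_S ∧ Y | S, U)` subject to `E[d(X,Y)] ≤ Δ`, taken over all finite
nonempty sets `𝒰` and all triples `(P_U, σ, W)`, equals the corresponding minimum
with `𝒰 = {1,2,3}`. -/
theorem stmt19 (k : ℕ) (hk1 : 1 ≤ k) (hkm : k ≤ m)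
    (P : (∀ i, X i) → ℝ) (hP : IsPMF P) (hfull : ∀ x, 0 < P x)
    (d : (∀ i, X i) → Y → ℝ) (hd : ∀ x y, 0 ≤ d x y) (Δ : ℝ) :
    sInf {r | ∃ (U : Type) (iU : Fintype U), Nonempty U ∧
        ∃ (PU : U → ℝ) (σ : (∀ i, X i) → U → SetsK m k → ℝ)
          (W : ∀ A : SetsK m k, (∀ i : A.1, X i.1) → U → Y → ℝ),
          IsPMF' U iU PU ∧ (∀ x u, IsPMF (σ x u)) ∧ (∀ A xA u, IsPMF (W A xA u)) ∧
          expDistMRS' U iU k P d PU σ W ≤ Δ ∧ condMIU' U iU k P PU σ W = r} =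
    sInf {r | ∃ (PU : Fin 3 → ℝ) (σ : (∀ i, X i) → Fin 3 → SetsK m k → ℝ)
        (W : ∀ A : SetsK m k, (∀ i : A.1, X i.1) → Fin 3 → Y → ℝ),
        IsPMF' (Fin 3) inferInstance PU ∧
        (∀ x u, IsPMF (σ x u)) ∧ (∀ A xA u, IsPMF (W A xA u)) ∧
        expDistMRS' (Fin 3) inferInstance k P d PU σ W ≤ Δ ∧
        condMIU' (Fin 3) inferInstance k P PU σ W = r} := by
  congr 1
  ext r
  simp only [Set.mem_setOf_eq]
  constructor
  · rintro ⟨U, iU, hne, PU, σ, W, hPU, hσ, hW, hdist, hMI⟩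
    letI := iU
    classical
    set v : U → ℝ × ℝ := fun u =>
      (GAux k P d (fun x A => σ x u A) (fun A xA y => W A xA u y),
       PhiAux k P (fun x A => σ x u A) (fun A xA y => W A xA u y)) with hv
    have hmem : (∑ u : U, PU u • v u) ∈ convexHull ℝ (Set.range v) :=
      (convex_convexHull ℝ _).sum_mem (fun u _ => hPU.1 u) hPU.2
        (fun u _ => subset_convexHull ℝ _ ⟨u, rfl⟩)
    obtain ⟨ι, hι, z, w, hz, hai, hw0, hw1, hwz⟩ :=
      eq_pos_convex_span_of_mem_convexHull hmem
    letI := hι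
    have hcard : Fintype.card ι ≤ 3 := by
      have h1 := hai.card_le_finrank_succ
      have h2 : Module.finrank ℝ (vectorSpan ℝ (Set.range z)) ≤ 2 := by
        have h3 := Submodule.finrank_le (vectorSpan ℝ (Set.range z))
        simpa using h3
      omega
    obtain ⟨e⟩ : Nonempty (ι ↪ Fin 3) :=
      Function.Embedding.nonempty_of_card_le (by simpa using hcard)
    have hsel : ∀ i : ι, ∃ u : U, v u = z i := fun i => hz ⟨i, rfl⟩
    choose uz huz using hsel
    obtain ⟨u₀⟩ := hne
    set g : Fin 3 → U := fun j => if h : ∃ i, e i = j then uz h.choose else u₀ with hg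
    set w' : Fin 3 → ℝ := fun j => if h : ∃ i, e i = j then w h.choose else 0 with hw'
    have hkey : (∑ j : Fin 3, w' j • v (g j)) = ∑ u : U, PU u • v u := by
      rw [← hwz, ← extend_sum e (fun i => w i • z i)]
      refine Finset.sum_congr rfl fun j _ => ?_
      by_cases h : ∃ i, e i = j
      · simp only [hw', hg, dif_pos h, huz]
      · simp only [hw', hg, dif_neg h, zero_smul]
    have hw'sum : ∑ j : Fin 3, w' j = 1 := by
      rw [← hw1, ← extend_sum e w]
    refine ⟨w', fun x j => σ x (g j), fun A xA j => W A xA (g j),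
      ⟨fun j => ?_, hw'sum⟩, fun x j => hσ x (g j), fun A xA j => hW A xA (g j), ?_, ?_⟩
    · by_cases h : ∃ i, e i = j
      · simp only [hw', dif_pos h]; exact (hw0 _).le
      · simp only [hw', dif_neg h]; exact le_refl 0
    · have : expDistMRS' (Fin 3) inferInstance k P d w'
          (fun x j => σ x (g j)) (fun A xA j => W A xA (g j))
          = expDistMRS' U iU k P d PU σ W := by
        rw [expDistMRS'_eq, expDistMRS'_eq]
        have l1 : (∑ j : Fin 3, w' j *
            GAux k P d (fun x A => σ x (g j) A) (fun A xA y => W A xA (g j) y))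
            = (∑ j : Fin 3, w' j • v (g j)).1 := by
          rw [Prod.fst_sum]
          exact Finset.sum_congr rfl fun j _ => by simp [hv, Prod.smul_fst, smul_eq_mul]
        have l2 : (∑ u : U, PU u *
            GAux k P d (fun x A => σ x u A) (fun A xA y => W A xA u y))
            = (∑ u : U, PU u • v u).1 := by
          rw [Prod.fst_sum]
          exact Finset.sum_congr rfl fun u _ => by simp [hv, Prod.smul_fst, smul_eq_mul]
        show (∑ j : Fin 3, w' j *
            GAux k P d (fun x A => σ x (g j) A) (fun A xA y => W A xA (g j) y)) = _
        rw [l1, hkey, ← l2]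
      rw [this]; exact hdist
    · have : condMIU' (Fin 3) inferInstance k P w'
          (fun x j => σ x (g j)) (fun A xA j => W A xA (g j))
          = condMIU' U iU k P PU σ W := by
        rw [condMIU'_eq, condMIU'_eq]
        have l1 : (∑ j : Fin 3, w' j *
            PhiAux k P (fun x A => σ x (g j) A) (fun A xA y => W A xA (g j) y))
            = (∑ j : Fin 3, w' j • v (g j)).2 := by
          rw [Prod.snd_sum]
          exact Finset.sum_congr rfl fun j _ => by simp [hv, Prod.smul_snd, smul_eq_mul]
        have l2 : (∑ u : U, PU u *
            PhiAux k P (fun x A => σ x u A) (fun A xA y => W A xA u y))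
            = (∑ u : U, PU u • v u).2 := by
          rw [Prod.snd_sum]
          exact Finset.sum_congr rfl fun u _ => by simp [hv, Prod.smul_snd, smul_eq_mul]
        show (∑ j : Fin 3, w' j *
            PhiAux k P (fun x A => σ x (g j) A) (fun A xA y => W A xA (g j) y)) = _
        rw [l1, hkey, ← l2]
      rw [this]; exact hMI
  · rintro ⟨PU, σ, W, hPU, hσ, hW, hdist, hMI⟩
    exact ⟨Fin 3, inferInstance, ⟨0⟩, PU, σ, W, hPU, hσ, hW, hdist, hMI⟩
end
end
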